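/- arXiv:2503.17334 — 7 statements merged into one kernel-verified Lean document; each statement's English description precedes it below -/
import Mathlib

section
/- For every fixed integer t ≥ 4, τ_t(n) ≥ n^{2−o(1)}; that is, for every ε > 0 there exists N such that for all n ≥ N there is an almost t-Gallai colouring of E(K_n), using only C(t,2) colours, that contains at least n^{2−ε} rainbow t-cliques. -/
/-- A set `S` of vertices of `K_n` is a rainbow `t`-clique for the edge colouring `c`
if it has `t` vertices and the colours of its edges are pairwise distinct. -/
def IsRainbowClique {n : ℕ} (t : ℕ) (c : Sym2 (Fin n) → ℕ) (S : Finset (Fin n)) : Prop :=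
  S.card = t ∧
    ∀ a ∈ S, ∀ b ∈ S, ∀ x ∈ S, ∀ y ∈ S,
      a ≠ b → x ≠ y → s(a, b) ≠ s(x, y) → c s(a, b) ≠ c s(x, y)

/-- A colouring of `E(K_n)` is almost `t`-Gallai if no two (distinct) rainbow `t`-cliques
share an edge. -/
def AlmostGallai {n : ℕ} (t : ℕ) (c : Sym2 (Fin n) → ℕ) : Prop :=
  ∀ S T : Finset (Fin n), IsRainbowClique t c S → IsRainbowClique t c T → S ≠ T →
    ∀ a b : Fin n, a ≠ b → a ∈ S → b ∈ S → a ∈ T → b ∈ T → False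

/-- The number of rainbow `t`-cliques of the colouring `c` of `E(K_n)`. -/
noncomputable def rainbowCount {n : ℕ} (t : ℕ) (c : Sym2 (Fin n) → ℕ) : ℕ :=
  {S : Finset (Fin n) | IsRainbowClique t c S}.ncard

/-
Think of vertex `i * M + p` as the point `(i, p)` of a `t × M` grid. An edge from `(i, p)` to
`(j, q)`, `i < j`, gets the colour `{i, j}` when `q = p + (j - i) * a` for a slope `a` in a set `A`;
every other edge gets the colour `{0, 1}`. Each line `{(i, x + i * a) : i < t}` with `a ∈ A` is then
a rainbow clique. Conversely, a rainbow clique has at most one edge of colour `{0, 1}`, so it meets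
every part once and all of its pairs but one have a slope in `A`; on a triangle the three slopes
satisfy `l * a + m * b = (l + m) * c`. If `A` has no such relation with `a ≠ b`, the clique is a
line, and two lines sharing two points coincide. Behrend's construction (integer points of a
sphere, read as base-`d` numbers) gives such an `A` of size `D^{1-O(1/k)}` in `[0, D)`, by strict
convexity of the sphere, and the `D * |A|` lines then number `n^{2-O(1/k)}`.
-/

open Finset

lemma choose_two_succ (j : ℕ) : (j + 1).choose 2 = j + j.choose 2 := by
  rw [Nat.choose_succ_succ, Nat.choose_one_right]

lemma eq_of_add_choose_two_eq {i j i' j' : ℕ} (hij : i < j) (hij' : i' < j')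
    (h : i + j.choose 2 = i' + j'.choose 2) : i = i' ∧ j = j' := by
  have key : ∀ {i j i' j' : ℕ}, i < j → j < j' → i + j.choose 2 < i' + j'.choose 2 := by
    intro i j i' j' hij hjj'
    have := Nat.choose_le_choose 2 (Nat.succ_le_of_lt hjj')
    rw [choose_two_succ] at this
    omega
  rcases lt_trichotomy j j' with hj | rfl | hj
  · exact absurd h (key hij hj).ne
  · omega
  · exact absurd h (key hij' hj).ne'

/-- The index `i + j.choose 2` of `{i, j}`, `i < j`, in the colexicographic order of pairs; it maps
the pairs in `range t` bijectively onto `range (t.choose 2)`. -/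
def pairCode (e : Sym2 ℕ) : ℕ := e.inf + e.sup.choose 2

lemma pairCode_zero_one : pairCode s(0, 1) = 0 := rfl

lemma pairCode_lt {i j t : ℕ} (hij : i ≠ j) (hi : i < t) (hj : j < t) :
    pairCode s(i, j) < t.choose 2 := by
  have h : (max i j + 1).choose 2 ≤ t.choose 2 := Nat.choose_le_choose 2 (by omega)
  rw [choose_two_succ] at h
  simp only [pairCode, Sym2.inf_mk, Sym2.sup_mk]
  omega

lemma pairCode_inj {e e' : Sym2 ℕ} (he : ¬e.IsDiag) (he' : ¬e'.IsDiag)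
    (h : pairCode e = pairCode e') : e = e' := by
  induction e using Sym2.ind with | _ i j =>
  induction e' using Sym2.ind with | _ i' j' =>
  rw [Sym2.mk_isDiag_iff] at he he'
  exact Sym2.inf_eq_inf_and_sup_eq_sup.1
    (eq_of_add_choose_two_eq (min_lt_max.2 he) (min_lt_max.2 he') h)

def WeightedAverageFree (L : ℕ) (A : Set ℕ) : Prop :=
  ∀ ⦃a⦄, a ∈ A → ∀ ⦃b⦄, b ∈ A → ∀ ⦃c⦄, c ∈ A → ∀ ⦃l m : ℕ⦄, 0 < l → 0 < m → l + m ≤ L →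
    l * a + m * b = (l + m) * c → a = b

namespace WeightedAverageFree

variable {L : ℕ} {A : Set ℕ}

lemma eq_and_eq_of_mul_add_mul_eq (hA : WeightedAverageFree L A) {a b c l m : ℕ} (ha : a ∈ A)
    (hb : b ∈ A) (hc : c ∈ A) (hl : 0 < l) (hm : 0 < m) (hL : l + m ≤ L)
    (h : l * a + m * b = (l + m) * c) : a = c ∧ b = c := by
  obtain rfl := hA ha hb hc hl hm hL h
  have : a = c := Nat.eq_of_mul_eq_mul_left (Nat.add_pos_left hl m) (by rw [← h]; ring)
  exact ⟨this, this⟩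

lemma exists_eq_add_mul {t : ℕ} (hA : WeightedAverageFree (t - 1) A) (ht : 4 ≤ t) {f : ℕ → ℕ}
    (hf : ∀ i j, i < j → j < t → (i, j) ≠ (0, 1) → ∃ a ∈ A, f j = f i + (j - i) * a) :
    ∃ a ∈ A, ∀ i < t, f i = f 0 + i * a := by
  -- The pair `(0, 1)` has no slope: the triangles `0 2 3` and `1 2 3` give `a₁₂ = a₂₃ = a₀₂`,
  -- and the triangles `0 2 i` give `a₀ᵢ = a₀₂`.
  obtain ⟨a, ha, h02⟩ := hf 0 2 (by omega) (by omega) (by simp)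
  obtain ⟨b, hb, h23⟩ := hf 2 3 (by omega) (by omega) (by simp)
  obtain ⟨c, hc, h03⟩ := hf 0 3 (by omega) (by omega) (by simp)
  obtain ⟨d, hd, h12⟩ := hf 1 2 (by omega) (by omega) (by simp)
  obtain ⟨e, he, h13⟩ := hf 1 3 (by omega) (by omega) (by simp)
  have hab := hA.eq_and_eq_of_mul_add_mul_eq ha hb hc (l := 2) (m := 1) (by omega) (by omega)
    (by omega) (by omega)
  have hdb := hA.eq_and_eq_of_mul_add_mul_eq hd hb he (l := 1) (m := 1) (by omega) (by omega)
    (by omega) (by omega)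
  refine ⟨a, ha, fun i hi => ?_⟩
  match i with
  | 0 => simp
  | 1 => omega
  | 2 => omega
  | i + 3 =>
    obtain ⟨g, hg, h2i⟩ := hf 2 (i + 3) (by omega) hi (by simp)
    obtain ⟨h, hh, h0i⟩ := hf 0 (i + 3) (by omega) hi (by simp)
    rw [show i + 3 - 2 = i + 1 by omega] at h2i
    have := hA.eq_and_eq_of_mul_add_mul_eq ha hg hh (l := 2) (m := i + 1) (by omega) (by omega)
      (by omega) (by rw [h2i, h02] at h0i; simp only [Nat.sub_zero] at h0i; linarith)
    rw [h0i, ← this.1]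
    simp

end WeightedAverageFree

namespace Behrend

variable {k B r : ℕ}

/-- The ball is strictly convex, so a proper convex combination of two distinct points of the
sphere lies strictly inside it. -/
lemma eq_of_mul_add_mul_eq {x y z : Fin k → ℕ} (hx : x ∈ sphere k B r) (hy : y ∈ sphere k B r)
    (hz : z ∈ sphere k B r) {l m : ℕ} (hl : 0 < l) (hm : 0 < m)
    (h : ∀ i, l * x i + m * y i = (l + m) * z i) : x = y := by
  set e : (Fin k → ℕ) → EuclideanSpace ℝ (Fin k) := fun x => WithLp.toLp 2 ((↑) ∘ x)
  by_contra hxy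
  have hne : e x ≠ e y := fun h' =>
    hxy (funext fun i => by simpa [e] using congrArg (fun v : EuclideanSpace ℝ (Fin k) => v i) h')
  have hlm : (0 : ℝ) < l + m := by positivity
  have hcombo : (l / (l + m) : ℝ) • e x + (m / (l + m) : ℝ) • e y = e z := by
    ext i
    have hi : (l : ℝ) * x i + m * y i = (l + m) * z i := by exact_mod_cast h i
    simp only [e, PiLp.add_apply, PiLp.smul_apply, Function.comp_apply, smul_eq_mul]
    field_simp
    linarith
  have := norm_combo_lt_of_ne (a := (l / (l + m) : ℝ)) (b := m / (l + m))
    (norm_of_mem_sphere hx).le (norm_of_mem_sphere hy).le hne (by positivity) (by positivity)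
    (by rw [← add_div, div_self hlm.ne'])
  rw [hcombo, norm_of_mem_sphere hz] at this
  exact this.false

lemma map_lt_pow {d : ℕ} {x : Fin k → ℕ} (hx : ∀ i, x i < d) : map d x < d ^ k := by
  induction k with
  | zero => simp
  | succ k ih =>
    rw [map_succ', pow_succ]
    have h0 := hx 0
    have := ih (x := x ∘ Fin.succ) fun i => hx i.succ
    nlinarith

/-- As `L * B ≤ d`, weighted sums of base-`d` digits below `B` have no carries. -/
lemma weightedAverageFree_image_sphere {L d : ℕ} (hd : L * B ≤ d) :
    WeightedAverageFree L ((sphere k B r).image (map d) : Set ℕ) := by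
  simp only [WeightedAverageFree, coe_image, Set.mem_image, mem_coe]
  rintro _ ⟨x, hx, rfl⟩ _ ⟨y, hy, rfl⟩ _ ⟨z, hz, rfl⟩ l m hl hm hL h
  have hB : ∀ {w}, w ∈ sphere k B r → ∀ i, w i < B := fun hw => mem_box.1 (sphere_subset_box hw)
  have hlt : ∀ i, l * x i + m * y i < d := fun i => by
    have := hB hx i; have := hB hy i; nlinarith
  have hlt' : ∀ i, (l + m) * z i < d := fun i => by
    have := hB hz i; nlinarith
  have : l • x + m • y = (l + m) • z := by
    refine map_injOn (d := d) (x₁ := l • x + m • y) (x₂ := (l + m) • z) hlt hlt' ?_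
    simpa only [map_add, map_nsmul, smul_eq_mul] using h
  rw [eq_of_mul_add_mul_eq hx hy hz hl hm (congrFun this)]

lemma exists_weightedAverageFree {L d : ℕ} (k B : ℕ) (hL : 0 < L) (hd : L * B ≤ d) :
    ∃ A : Finset ℕ, WeightedAverageFree L A ∧ (∀ a ∈ A, a < d ^ k) ∧
      ((B ^ k : ℕ) / (k * B ^ 2 : ℕ) : ℝ) ≤ #A := by
  obtain ⟨r, hr⟩ := exists_large_sphere k B
  have hlt : ∀ x ∈ sphere k B r, ∀ i, x i < d := fun x hx i =>
    (mem_box.1 (sphere_subset_box hx) i).trans_le ((Nat.le_mul_of_pos_left B hL).trans hd)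
  refine ⟨(sphere k B r).image (map d), weightedAverageFree_image_sphere hd, ?_, ?_⟩
  · simp only [mem_image]
    rintro _ ⟨x, hx, rfl⟩
    exact map_lt_pow (hlt x hx)
  · rwa [card_image_of_injOn (map_injOn.mono hlt)]

end Behrend

section LineColouring

variable (t M : ℕ) (A : Set ℕ)

/-- Vertex `v` stands for the grid point `(v / M, v % M)`. -/
def Aligned (u v : ℕ) : Prop :=
  u / M < v / M ∧ v / M < t ∧ ∃ a ∈ A, v % M = u % M + (v / M - u / M) * a

/-- Edges that are not aligned share the colour `pairCode s(0, 1) = 0` with the aligned edges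
between the parts `0` and `1`. -/
noncomputable def lineColour (u v : ℕ) : ℕ :=
  open Classical in
  if Aligned t M A u v ∨ Aligned t M A v u then pairCode s(u / M, v / M) else 0

lemma lineColour_comm (u v : ℕ) : lineColour t M A u v = lineColour t M A v u := by
  unfold lineColour
  split_ifs <;> first | exact congrArg pairCode Sym2.eq_swap | rfl | tauto

noncomputable def lineColouring (n : ℕ) : Sym2 (Fin n) → ℕ :=
  Sym2.lift ⟨fun u v => lineColour t M A u v, fun u v => lineColour_comm t M A u v⟩

variable {t M A}

@[simp]
lemma lineColouring_mk {n : ℕ} (u v : Fin n) :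
    lineColouring t M A n s(u, v) = lineColour t M A u v := rfl

lemma lineColour_of_aligned {u v : ℕ} (h : Aligned t M A u v) :
    lineColour t M A u v = pairCode s(u / M, v / M) := by
  rw [lineColour, if_pos (Or.inl h)]

lemma lineColour_of_not_aligned {u v : ℕ} (h₁ : ¬Aligned t M A u v) (h₂ : ¬Aligned t M A v u) :
    lineColour t M A u v = 0 := by
  rw [lineColour, if_neg (not_or.2 ⟨h₁, h₂⟩)]

lemma lineColour_eq_zero_or (u v : ℕ) :
    lineColour t M A u v = 0 ∨ lineColour t M A u v = pairCode s(u / M, v / M) := by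
  unfold lineColour
  split_ifs <;> simp

lemma lineColour_of_div_eq {u v : ℕ} (h : u / M = v / M) : lineColour t M A u v = 0 :=
  lineColour_of_not_aligned (fun h' => h'.1.ne h) (fun h' => h'.1.ne' h)

lemma lineColour_of_le_div {u v : ℕ} (h : t ≤ u / M) : lineColour t M A u v = 0 :=
  lineColour_of_not_aligned (fun h' => by have := h'.2.1; have := h'.1; omega)
    (fun h' => by have := h'.2.1; omega)

lemma lineColouring_lt_choose (ht : 2 ≤ t) {n : ℕ} (e : Sym2 (Fin n)) :
    lineColouring t M A n e < t.choose 2 := by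
  induction e using Sym2.ind with
  | _ u v =>
    rw [lineColouring_mk, lineColour]
    split_ifs with h
    · obtain ⟨h₁, h₂, -⟩ | ⟨h₁, h₂, -⟩ := h
      · exact pairCode_lt h₁.ne (h₁.trans h₂) h₂
      · exact pairCode_lt h₁.ne' h₂ (h₁.trans h₂)
    · exact Nat.choose_pos ht

end LineColouring

def IsLine (t M x a : ℕ) {n : ℕ} (S : Finset (Fin n)) : Prop :=
  (∀ i < t, x + i * a < M) ∧ ∀ v : Fin n, v ∈ S ↔ ∃ i < t, (v : ℕ) = i * M + (x + i * a)

lemma div_mod_of_eq_mul_add {v i M y : ℕ} (hy : y < M) (hv : v = i * M + y) :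
    v / M = i ∧ v % M = y := by
  subst hv
  rw [add_comm, Nat.add_mul_div_right _ _ (by omega), Nat.add_mul_mod_self_right,
    Nat.div_eq_of_lt hy, Nat.mod_eq_of_lt hy, zero_add]
  exact ⟨rfl, rfl⟩

lemma eq_and_eq_of_add_mul_eq {i j x a x' a' : ℕ} (hij : i ≠ j) (hi : x + i * a = x' + i * a')
    (hj : x + j * a = x' + j * a') : x = x' ∧ a = a' := by
  zify at hi hj
  have : ((i : ℤ) - j) * (a - a') = 0 := by linear_combination hi - hj
  obtain h | h := mul_eq_zero.1 this
  · exact absurd (by omega) hij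
  · obtain rfl : a = a' := by omega
    omega

lemma mul_add_lt_mul {i t M y : ℕ} (hi : i < t) (hy : y < M) : i * M + y < t * M :=
  calc i * M + y < (i + 1) * M := by rw [add_one_mul]; omega
    _ ≤ t * M := Nat.mul_le_mul_right M hi

section Lines

variable {t M x a n : ℕ} {A : Set ℕ} {S T : Finset (Fin n)}

lemma lineColour_mul_add (hxa : ∀ i < t, x + i * a < M) (ha : a ∈ A) {i j : ℕ} (hi : i < t)
    (hj : j < t) (hij : i ≠ j) :
    lineColour t M A (i * M + (x + i * a)) (j * M + (x + j * a)) = pairCode s(i, j) := by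
  have hdiv : ∀ k < t, (k * M + (x + k * a)) / M = k := fun k hk =>
    (div_mod_of_eq_mul_add (hxa k hk) rfl).1
  have aligned : ∀ k l, k < l → l < t →
      Aligned t M A (k * M + (x + k * a)) (l * M + (x + l * a)) := fun k l hkl hl => by
    refine ⟨?_, ?_, a, ha, ?_⟩
    · rwa [hdiv k (hkl.trans hl), hdiv l hl]
    · rwa [hdiv l hl]
    · rw [hdiv k (hkl.trans hl), hdiv l hl, (div_mod_of_eq_mul_add (hxa k (hkl.trans hl)) rfl).2,
        (div_mod_of_eq_mul_add (hxa l hl) rfl).2, add_assoc, ← add_mul, Nat.add_sub_cancel' hkl.le]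
  rcases hij.lt_or_gt with h | h
  · rw [lineColour_of_aligned (aligned i j h hj), hdiv i hi, hdiv j hj]
  · rw [lineColour_comm, lineColour_of_aligned (aligned j i h hi), hdiv i hi, hdiv j hj,
      Sym2.eq_swap]

namespace IsLine

lemma card_eq (hS : IsLine t M x a S) (hn : t * M ≤ n) : #S = t := by
  have hlt : ∀ i < t, i * M + (x + i * a) < n := fun i hi =>
    (mul_add_lt_mul hi (hS.1 i hi)).trans_le hn
  have hmap : S.map Fin.valEmbedding = (range t).image fun i => i * M + (x + i * a) := by
    ext y
    simp only [mem_map, mem_image, mem_range, Fin.valEmbedding_apply]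
    constructor
    · rintro ⟨v, hv, rfl⟩
      obtain ⟨i, hi, hv⟩ := (hS.2 v).1 hv
      exact ⟨i, hi, hv.symm⟩
    · rintro ⟨i, hi, rfl⟩
      exact ⟨⟨_, hlt i hi⟩, (hS.2 _).2 ⟨i, hi, rfl⟩, rfl⟩
  rw [← card_map Fin.valEmbedding, hmap, card_image_of_injOn, card_range]
  intro i hi j hj h
  simp only [coe_range, Set.mem_Iio] at hi hj
  have h₁ := div_mod_of_eq_mul_add (hS.1 j hj) h
  rw [(div_mod_of_eq_mul_add (hS.1 i hi) rfl).1] at h₁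
  exact h₁.1

lemma isRainbowClique (hS : IsLine t M x a S) (ha : a ∈ A) (hn : t * M ≤ n) :
    IsRainbowClique t (lineColouring t M A n) S := by
  refine ⟨hS.card_eq hn, ?_⟩
  have mem : ∀ v ∈ S, ∃ i < t, (v : ℕ) = i * M + (x + i * a) := fun v hv => (hS.2 v).1 hv
  intro p hp q hq r hr s hs hpq hrs hne heq
  apply hne
  obtain ⟨i, hi, hp⟩ := mem p hp
  obtain ⟨j, hj, hq⟩ := mem q hq
  obtain ⟨k, hk, hr⟩ := mem r hr
  obtain ⟨l, hl, hs⟩ := mem s hs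
  have hij : i ≠ j := by rintro rfl; exact hpq (Fin.ext (hp.trans hq.symm))
  have hkl : k ≠ l := by rintro rfl; exact hrs (Fin.ext (hr.trans hs.symm))
  rw [lineColouring_mk, lineColouring_mk, hp, hq, hr, hs, lineColour_mul_add hS.1 ha hi hj hij,
    lineColour_mul_add hS.1 ha hk hl hkl] at heq
  have := congrArg (Sym2.map fun i => i * M + (x + i * a))
    (pairCode_inj (Sym2.mk_isDiag_iff.not.2 hij) (Sym2.mk_isDiag_iff.not.2 hkl) heq)
  apply Sym2.map.injective Fin.val_injective
  simpa only [Sym2.map_mk, hp, hq, hr, hs] using this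

lemma eq_of_mem_of_mem {x' a' : ℕ} (hS : IsLine t M x a S) (hT : IsLine t M x' a' T) {u v : Fin n}
    (huv : u ≠ v) (huS : u ∈ S) (hvS : v ∈ S) (huT : u ∈ T) (hvT : v ∈ T) :
    x = x' ∧ a = a' := by
  obtain ⟨i, hi, hu⟩ := (hS.2 u).1 huS
  obtain ⟨j, hj, hv⟩ := (hS.2 v).1 hvS
  obtain ⟨i', hi', hu'⟩ := (hT.2 u).1 huT
  obtain ⟨j', hj', hv'⟩ := (hT.2 v).1 hvT
  obtain ⟨rfl, hxu⟩ := div_mod_of_eq_mul_add (hS.1 i hi) hu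
  obtain ⟨rfl, hxv⟩ := div_mod_of_eq_mul_add (hS.1 j hj) hv
  obtain ⟨h₁, hxu'⟩ := div_mod_of_eq_mul_add (hT.1 i' hi') hu'
  obtain ⟨h₂, hxv'⟩ := div_mod_of_eq_mul_add (hT.1 j' hj') hv'
  subst h₁ h₂
  refine eq_and_eq_of_add_mul_eq (fun h => huv (Fin.ext ?_)) (hxu.symm.trans hxu')
    (hxv.symm.trans hxv')
  rw [hu, hv, h]

lemma unique {x' a' : ℕ} (hS : IsLine t M x a S) (hS' : IsLine t M x' a' S) (ht : 2 ≤ t)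
    (hn : t * M ≤ n) : x = x' ∧ a = a' := by
  have hlt : ∀ i < t, i * M + (x + i * a) < n := fun i hi =>
    (mul_add_lt_mul hi (hS.1 i hi)).trans_le hn
  have hmem : ∀ i (hi : i < t), (⟨_, hlt i hi⟩ : Fin n) ∈ S := fun i hi => (hS.2 _).2 ⟨i, hi, rfl⟩
  have h₀ := hS.1 0 (by omega)
  exact hS.eq_of_mem_of_mem hS' (u := ⟨_, hlt 0 (by omega)⟩) (v := ⟨_, hlt 1 (by omega)⟩)
    (fun h => by simp only [Fin.mk.injEq] at h; omega) (hmem 0 (by omega)) (hmem 1 ht)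
    (hmem 0 (by omega)) (hmem 1 ht)

end IsLine

end Lines

namespace IsRainbowClique

variable {t n : ℕ} {c : Sym2 (Fin n) → ℕ} {S : Finset (Fin n)}

lemma eq_of_colour_eq (hS : IsRainbowClique t c S) {u v w z : Fin n} (hu : u ∈ S) (hv : v ∈ S)
    (hw : w ∈ S) (hz : z ∈ S) (huv : u ≠ v) (hwz : w ≠ z) (h : c s(u, v) = c s(w, z)) :
    s(u, v) = s(w, z) :=
  by_contra fun hne => hS.2 u hu v hv w hw z hz huv hwz hne h

lemma exists_mem_ne_ne (hS : IsRainbowClique t c S) (ht : 3 ≤ t) (u v : Fin n) :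
    ∃ w ∈ S, w ≠ u ∧ w ≠ v := by
  have : 0 < #((S.erase u).erase v) := by
    have := pred_card_le_card_erase (s := S) (a := u)
    have := pred_card_le_card_erase (s := S.erase u) (a := v)
    have := hS.1
    omega
  obtain ⟨w, hw⟩ := card_pos.1 this
  simp only [mem_erase] at hw
  exact ⟨w, hw.2.2, hw.2.1, hw.1⟩

lemma colour_ne (hS : IsRainbowClique t c S) {u v w : Fin n} (hu : u ∈ S) (hv : v ∈ S)
    (hw : w ∈ S) (hvu : v ≠ u) (hwu : w ≠ u) (hvw : v ≠ w) : c s(u, v) ≠ c s(u, w) := fun h =>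
  hvw (Sym2.congr_right.1 (hS.eq_of_colour_eq hu hv hu hw hvu.symm hwu.symm h))

variable {M : ℕ} {A : Set ℕ}

lemma div_lt (hS : IsRainbowClique t (lineColouring t M A n) S) (ht : 3 ≤ t) {v : Fin n}
    (hv : v ∈ S) : (v : ℕ) / M < t := by
  by_contra! hvt
  obtain ⟨w, hw, hwv, -⟩ := hS.exists_mem_ne_ne ht v v
  obtain ⟨w', hw', hw'v, hw'w⟩ := hS.exists_mem_ne_ne ht v w
  exact hS.colour_ne hv hw hw' hwv hw'v hw'w.symm (by
    simp only [lineColouring_mk, lineColour_of_le_div hvt])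

lemma injOn_div (hS : IsRainbowClique t (lineColouring t M A n) S) (ht : 3 ≤ t) :
    Set.InjOn (fun v : Fin n => (v : ℕ) / M) S := by
  intro u hu v hv (huv : (u : ℕ) / M = v / M)
  by_contra huv'
  obtain ⟨w, hw, hwu, hwv⟩ := hS.exists_mem_ne_ne ht u v
  have h₀ : lineColour t M A u v = 0 := lineColour_of_div_eq huv
  rcases lineColour_eq_zero_or (t := t) (M := M) (A := A) u w with h₁ | h₁
  · exact hS.colour_ne hu hv hw (Ne.symm huv') hwu hwv.symm (by
      simp only [lineColouring_mk, h₀, h₁])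
  rcases lineColour_eq_zero_or (t := t) (M := M) (A := A) v w with h₂ | h₂
  · exact hS.colour_ne hv hu hw huv' hwv hwu.symm (by
      simp only [lineColouring_mk]; rw [lineColour_comm, h₀, h₂])
  · exact hS.colour_ne hw hu hv hwu.symm hwv.symm huv' (by
      simp only [lineColouring_mk]; rw [lineColour_comm, h₁, lineColour_comm, h₂, huv])

lemma aligned (hS : IsRainbowClique t (lineColouring t M A n) S) {u v w₀ w₁ : Fin n} (hu : u ∈ S)
    (hv : v ∈ S) (hw₀ : w₀ ∈ S) (hw₁ : w₁ ∈ S) (h₀ : (w₀ : ℕ) / M = 0) (h₁ : (w₁ : ℕ) / M = 1)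
    (huv : (u : ℕ) / M < v / M) (hne : ((u : ℕ) / M, (v : ℕ) / M) ≠ (0, 1)) :
    Aligned t M A u v := by
  by_contra h
  have hc : lineColouring t M A n s(u, v) = lineColouring t M A n s(w₀, w₁) := by
    rw [lineColouring_mk, lineColouring_mk,
      lineColour_of_not_aligned h (fun h' => h'.1.not_gt huv)]
    rcases lineColour_eq_zero_or (t := t) (M := M) (A := A) w₀ w₁ with h' | h'
    · exact h'.symm
    · rw [h', h₀, h₁, pairCode_zero_one]
  have huv' : u ≠ v := fun h => huv.ne (by rw [h])
  have hw : w₀ ≠ w₁ := fun h => by rw [h, h₁] at h₀; exact one_ne_zero h₀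
  have := congrArg (Sym2.map fun v : Fin n => (v : ℕ) / M)
    (hS.eq_of_colour_eq hu hv hw₀ hw₁ huv' hw hc)
  simp only [Sym2.map_mk, h₀, h₁, Sym2.eq_iff] at this
  grind

theorem exists_isLine (hS : IsRainbowClique t (lineColouring t M A n) S) (ht : 4 ≤ t)
    (hA : WeightedAverageFree (t - 1) A) : ∃ x, ∃ a ∈ A, IsLine t M x a S := by
  have hlt : ∀ {v}, v ∈ S → (v : ℕ) / M < t := hS.div_lt (by omega)
  have hinj := hS.injOn_div (by omega)
  have hsurj : ∀ i < t, ∃ v ∈ S, (v : ℕ) / M = i := fun i hi =>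
    surjOn_of_injOn_of_card_le (s := S) (t := range t) _ (fun v hv => mem_range.2 (hlt hv)) hinj
      (by rw [card_range, hS.1]) (mem_range.2 hi)
  have : Nonempty (Fin n) := ⟨(hsurj 0 (by omega)).choose⟩
  choose! w hwS hw using hsurj
  have hM : M ≠ 0 := fun h => by simpa [h] using hw 1 (by omega)
  obtain ⟨a, ha, hpos⟩ := hA.exists_eq_add_mul ht (f := fun i => (w i : ℕ) % M)
    fun i j hij hj hne => by
      have hi : i < t := hij.trans hj
      obtain ⟨-, -, a, ha, h⟩ := hS.aligned (hwS i hi) (hwS j hj) (hwS 0 (by omega))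
        (hwS 1 (by omega)) (hw 0 (by omega)) (hw 1 (by omega)) (by rwa [hw i hi, hw j hj])
        (by rwa [hw i hi, hw j hj])
      rw [hw i hi, hw j hj] at h
      exact ⟨a, ha, h⟩
  have hval : ∀ i < t, (w i : ℕ) = i * M + ((w 0 : ℕ) % M + i * a) := fun i hi => by
    have := Nat.div_add_mod' (w i : ℕ) M
    rwa [hw i hi, hpos i hi, eq_comm] at this
  refine ⟨(w 0 : ℕ) % M, a, ha, fun i hi => ?_, fun v => ⟨fun hv => ?_, ?_⟩⟩
  · rw [← hpos i hi]
    exact Nat.mod_lt _ (Nat.pos_of_ne_zero hM)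
  · refine ⟨v / M, hlt hv, ?_⟩
    rw [← hval _ (hlt hv)]
    exact congrArg Fin.val (hinj hv (hwS _ (hlt hv)) (hw _ (hlt hv)).symm)
  · rintro ⟨i, hi, hv⟩
    rw [show v = w i from Fin.ext (hv.trans (hval i hi).symm)]
    exact hwS i hi

end IsRainbowClique

section Colouring

variable {t M n : ℕ}

theorem almostGallai_lineColouring {A : Set ℕ} (ht : 4 ≤ t) (hA : WeightedAverageFree (t - 1) A) :
    AlmostGallai t (lineColouring t M A n) := by
  intro S T hS hT hST u v huv huS hvS huT hvT
  obtain ⟨x, a, -, hxS⟩ := hS.exists_isLine ht hA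
  obtain ⟨x', a', -, hxT⟩ := hT.exists_isLine ht hA
  obtain ⟨rfl, rfl⟩ := hxS.eq_of_mem_of_mem hxT huv huS hvS huT hvT
  exact hST (ext fun w => by rw [hxS.2, hxT.2])

theorem le_rainbowCount_lineColouring {D : ℕ} {A : Finset ℕ} (ht : 2 ≤ t) (hAD : ∀ a ∈ A, a < D)
    (hn : t * (t * D) ≤ n) : D * #A ≤ rainbowCount t (lineColouring t (t * D) A n) := by
  classical
  have hxa : ∀ p ∈ range D ×ˢ A, ∀ i < t, p.1 + i * p.2 < t * D := fun p hp i hi => by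
    obtain ⟨hx, ha⟩ := mem_product.1 hp
    calc p.1 + i * p.2 < (i + 1) * D := by
          have := Nat.mul_le_mul_left i (hAD _ ha).le; rw [mem_range] at hx; rw [add_one_mul]; omega
      _ ≤ t * D := Nat.mul_le_mul_right D hi
  let line : ℕ × ℕ → Finset (Fin n) := fun p =>
    {v | ∃ i < t, (v : ℕ) = i * (t * D) + (p.1 + i * p.2)}
  have hline : ∀ p ∈ range D ×ˢ A, IsLine t (t * D) p.1 p.2 (line p) := fun p hp =>
    ⟨hxa p hp, by simp [line]⟩
  calc D * #A = (↑(range D ×ˢ A) : Set (ℕ × ℕ)).ncard := by simp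
    _ ≤ rainbowCount t (lineColouring t (t * D) A n) := by
      refine Set.ncard_le_ncard_of_injOn line (fun p hp => (hline p hp).isRainbowClique
        (mem_coe.2 (mem_product.1 hp).2) hn) (fun p hp q hq h => ?_)
      have := (hline p hp).unique (h ▸ hline q hq) ht hn
      exact Prod.ext this.1 this.2

theorem exists_almostGallai_colouring (ht : 4 ≤ t) {D : ℕ} {A : Finset ℕ}
    (hA : WeightedAverageFree (t - 1) A) (hAD : ∀ a ∈ A, a < D) (hn : t * (t * D) ≤ n) :
    ∃ c : Sym2 (Fin n) → ℕ, (∀ e, c e < t.choose 2) ∧ AlmostGallai t c ∧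
      D * #A ≤ rainbowCount t c :=
  ⟨lineColouring t (t * D) A n, lineColouring_lt_choose (by omega),
    almostGallai_lineColouring ht hA, le_rainbowCount_lineColouring (by omega) hAD hn⟩

end Colouring

lemma exists_mul_pow_le_lt {C k : ℕ} (hC : 0 < C) (hk : k ≠ 0) (n : ℕ) :
    ∃ B, C * B ^ k ≤ n ∧ n < C * (B + 1) ^ k := by
  have h : ∃ B, n < C * (B + 1) ^ k := ⟨n, calc
    n < n + 1 := n.lt_succ_self
    _ ≤ (n + 1) ^ k := Nat.le_self_pow hk _
    _ ≤ C * (n + 1) ^ k := Nat.le_mul_of_pos_left _ hC⟩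
  refine ⟨Nat.find h, ?_, Nat.find_spec h⟩
  cases hB : Nat.find h with
  | zero => simp [zero_pow hk]
  | succ B => exact not_lt.1 (Nat.find_min h (by omega))

lemma rpow_two_sub_le {k : ℕ} (hk : 2 ≤ k) {x K B : ℝ} (hx : 0 ≤ x) (hK : 1 ≤ K)
    (hB : k * K ^ 2 ≤ B) (hxB : x ≤ K * B ^ k) :
    x ^ (2 - 3 / k : ℝ) ≤ B ^ k * (B ^ k / (k * B ^ 2)) := by
  have hk' : (2 : ℝ) ≤ k := by exact_mod_cast hk
  have hB1 : 1 ≤ B := le_trans (by nlinarith) hB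
  have hexp : (k : ℝ) * (2 - 3 / k) = (2 * k - 3 : ℕ) := by
    rw [Nat.cast_sub (by omega)]; push_cast; field_simp
  calc x ^ (2 - 3 / k : ℝ) ≤ (K * B ^ k) ^ (2 - 3 / k : ℝ) :=
        Real.rpow_le_rpow hx hxB (by rw [sub_nonneg, div_le_iff₀ (by positivity)]; linarith)
    _ = K ^ (2 - 3 / k : ℝ) * B ^ (2 * k - 3) := by
        rw [Real.mul_rpow (by positivity) (by positivity), ← Real.rpow_natCast_mul (by positivity),
          hexp, Real.rpow_natCast]
    _ ≤ K ^ 2 * B ^ (2 * k - 3) := by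
        gcongr
        exact_mod_cast Real.rpow_le_rpow_of_exponent_le hK (by
          push_cast; rw [sub_le_self_iff]; positivity : (2 - 3 / k : ℝ) ≤ (2 : ℕ))
    _ ≤ B ^ k * (B ^ k / (k * B ^ 2)) := by
        rw [mul_div_assoc', le_div_iff₀ (by positivity), ← pow_add,
          show k + k = 2 * k - 3 + 3 by omega, pow_add]
        have h3 : K ^ 2 * (k * B ^ 2) ≤ B ^ 3 := calc
          K ^ 2 * (k * B ^ 2) = k * K ^ 2 * B ^ 2 := by ring
          _ ≤ B * B ^ 2 := by gcongr
          _ = B ^ 3 := by ring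
        calc K ^ 2 * B ^ (2 * k - 3) * (k * B ^ 2) = B ^ (2 * k - 3) * (K ^ 2 * (k * B ^ 2)) := by
              ring
          _ ≤ B ^ (2 * k - 3) * B ^ 3 := by gcongr

theorem exists_colouring_rpow_le {t k : ℕ} (ht : 4 ≤ t) (hk : 2 ≤ k) :
    ∃ N : ℕ, ∀ n ≥ N, ∃ c : Sym2 (Fin n) → ℕ, (∀ e, c e < t.choose 2) ∧ AlmostGallai t c ∧
      (n : ℝ) ^ (2 - 3 / k : ℝ) ≤ rainbowCount t c := by
  set K := t ^ 2 * (2 * t) ^ k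
  refine ⟨t ^ 2 * t ^ k * (k * K ^ 2) ^ k, fun n hn => ?_⟩
  obtain ⟨B, hBn, hnB⟩ :=
    exists_mul_pow_le_lt (C := t ^ 2 * t ^ k) (k := k) (by positivity) (by omega) n
  have hB : k * K ^ 2 ≤ B := by
    by_contra! h
    exact (hnB.trans_le (Nat.mul_le_mul_left _ (Nat.pow_le_pow_left h k))).not_ge hn
  have hK : 1 ≤ K := Nat.one_le_iff_ne_zero.2 (by positivity)
  have hnK : n ≤ K * B ^ k := calc
    n ≤ t ^ 2 * t ^ k * (B + 1) ^ k := hnB.le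
    _ ≤ t ^ 2 * t ^ k * (2 * B) ^ k := by gcongr; nlinarith
    _ = K * B ^ k := by ring
  obtain ⟨A, hA, hAD, hcard⟩ := Behrend.exists_weightedAverageFree (L := t - 1) (d := t * B) k B
    (by omega) (Nat.mul_le_mul_right B (by omega))
  obtain ⟨c, hc, hG, hcount⟩ := exists_almostGallai_colouring ht hA hAD
    (le_of_eq_of_le (by ring) hBn)
  refine ⟨c, hc, hG, ?_⟩
  push_cast at hcard
  calc (n : ℝ) ^ (2 - 3 / k : ℝ) ≤ (B : ℝ) ^ k * ((B : ℝ) ^ k / (k * (B : ℝ) ^ 2)) :=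
        rpow_two_sub_le hk (Nat.cast_nonneg n) (K := K) (by exact_mod_cast hK)
          (by exact_mod_cast hB) (by exact_mod_cast hnK)
    _ ≤ ((t * B) ^ k : ℕ) * #A := by
        push_cast
        gcongr
        exact le_mul_of_one_le_left (Nat.cast_nonneg B) (by exact_mod_cast (by omega : 1 ≤ t))
    _ ≤ rainbowCount t c := by exact_mod_cast hcount

theorem tau_lower_bound (t : ℕ) (ht : 4 ≤ t) :
    ∀ ε : ℝ, 0 < ε → ∃ N : ℕ, ∀ n : ℕ, N ≤ n →
      ∃ c : Sym2 (Fin n) → ℕ, (∀ e, c e < t.choose 2) ∧ AlmostGallai t c ∧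
        (n : ℝ) ^ ((2 : ℝ) - ε) ≤ (rainbowCount t c : ℝ) := by
  intro ε hε
  set k := ⌈3 / ε⌉₊ + 2
  obtain ⟨N, hN⟩ := exists_colouring_rpow_le ht (k := k) (by omega)
  refine ⟨N + 1, fun n hn => ?_⟩
  obtain ⟨c, hc, hG, hcount⟩ := hN n (by omega)
  have hk : 3 / ε ≤ k := (Nat.le_ceil _).trans (by simp [k])
  have hεk : 3 / (k : ℝ) ≤ ε := by
    rw [div_le_iff₀ hε] at hk
    rw [div_le_iff₀ (by positivity)]
    linarith
  refine ⟨c, hc, hG, le_trans (Real.rpow_le_rpow_of_exponent_le ?_ (by linarith)) hcount⟩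
  exact_mod_cast (by omega : 1 ≤ n)
end

section
/- For every n ∈ ℕ, g(n) ≤ τ_3(n) ≤ (9/2)·g(n). -/
/-- `tau t n` : the maximum number of rainbow `t`-cliques over all almost `t`-Gallai
colourings of `E(K_n)`. -/
noncomputable def tau (t n : ℕ) : ℕ :=
  sSup {k | ∃ c : Sym2 (Fin n) → ℕ, AlmostGallai t c ∧ rainbowCount t c = k}


/-- `g n` : the maximum number of rainbow triangles over all almost `3`-Gallai
colourings of `E(K_n)` using at most three colours. -/
noncomputable def g3 (n : ℕ) : ℕ :=
  sSup {k | ∃ c : Sym2 (Fin n) → ℕ, (∀ e, c e < 3) ∧ AlmostGallai 3 c ∧ rainbowCount 3 c = k}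

/-!
Recolour an almost 3-Gallai colouring by composing it with a uniformly random map from its palette
to three colours. Every rainbow triangle of the new colouring was rainbow before, so the new
colouring is again almost 3-Gallai; and a rainbow triangle of the old colouring stays rainbow
exactly when its three colours receive distinct images, which happens with probability
`3! / 3 ^ 3 = 2 / 9`. Some recolouring therefore keeps at least `2 / 9` of the rainbow triangles.
-/

open Finset Function

open scoped Classical in
theorem card_filter_comp_embedding_mul_pow {α β γ : Type*} [Fintype α] [Fintype β] [Fintype γ]
    [DecidableEq α] [DecidableEq γ] (ι : γ ↪ α) (P : (γ → β) → Prop) :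
    #{φ : α → β | P (φ ∘ ι)} * Fintype.card β ^ Fintype.card γ =
      #{ψ : γ → β | P ψ} * Fintype.card β ^ Fintype.card α := by
  let e : (α → β) ≃ (γ → β) × ({a // a ∉ Set.range ι} → β) :=
    (Equiv.piEquivPiSubtypeProd (· ∈ Set.range ι) fun _ => β).trans
      ((Equiv.arrowCongr (Equiv.ofInjective ι ι.injective).symm (Equiv.refl β)).prodCongr
        (Equiv.refl _))
  have he (φ : α → β) : (e φ).1 = φ ∘ ι := rfl
  have hfilter : #{φ : α → β | P (φ ∘ ι)} =
      #{ψ : γ → β | P ψ} * Fintype.card ({a // a ∉ Set.range ι} → β) := by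
    rw [← card_univ, ← card_product]
    exact card_equiv e fun φ => by simp [he]
  have htotal := Fintype.card_congr e
  rw [Fintype.card_prod, Fintype.card_fun, Fintype.card_fun] at htotal
  rw [hfilter, htotal]
  ring

open scoped Classical in
theorem card_filter_injOn_mul_pow {α β : Type*} [Fintype α] [Fintype β] [DecidableEq α]
    (s : Finset α) :
    #{φ : α → β | Set.InjOn φ s} * Fintype.card β ^ #s =
      (Fintype.card β).descFactorial #s * Fintype.card β ^ Fintype.card α := by
  have hinj : #{ψ : s → β | Injective ψ} = (Fintype.card β).descFactorial #s := by
    rw [← Fintype.card_subtype, Fintype.card_congr (Equiv.subtypeInjectiveEquivEmbedding _ _),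
      Fintype.card_embedding_eq, Fintype.card_coe]
  have h := card_filter_comp_embedding_mul_pow (β := β) (Embedding.subtype (· ∈ s)) Injective
  rw [Fintype.card_coe] at h
  rw [← hinj]
  convert h using 3
  · ext φ
    simp only [mem_filter, mem_univ, true_and]
    exact Set.injOn_iff_injective
  · -- the two sides differ only in the decidability instances behind `univ`
    ext
    simp

def cliqueEdges {α : Type*} [DecidableEq α] (S : Finset α) : Finset (Sym2 α) :=
  S.offDiag.image Sym2.mk.uncurry

theorem mem_cliqueEdges {α : Type*} [DecidableEq α] {S : Finset α} {e : Sym2 α} :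
    e ∈ cliqueEdges S ↔ ∃ a ∈ S, ∃ b ∈ S, a ≠ b ∧ s(a, b) = e := by
  simp [cliqueEdges, and_assoc]

theorem card_cliqueEdges {α : Type*} [DecidableEq α] (S : Finset α) :
    #(cliqueEdges S) = (#S).choose 2 :=
  Sym2.card_image_offDiag S

section

variable {n : ℕ}

theorem isRainbowClique_iff {t : ℕ} {c : Sym2 (Fin n) → ℕ} {S : Finset (Fin n)} :
    IsRainbowClique t c S ↔ #S = t ∧ Set.InjOn c (cliqueEdges S) := by
  refine and_congr_right fun _ =>
    ⟨fun h e he e' he' hcc => ?_, fun h a ha b hb x hx y hy hab hxy hne hcc => ?_⟩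
  · obtain ⟨a, ha, b, hb, hab, rfl⟩ := mem_cliqueEdges.1 he
    obtain ⟨x, hx, y, hy, hxy, rfl⟩ := mem_cliqueEdges.1 he'
    by_contra hne
    exact h a ha b hb x hx y hy hab hxy hne hcc
  · exact hne (h (mem_cliqueEdges.2 ⟨a, ha, b, hb, hab, rfl⟩)
      (mem_cliqueEdges.2 ⟨x, hx, y, hy, hxy, rfl⟩) hcc)

theorem isRainbowClique_recolour_iff {t M k : ℕ} {S : Finset (Fin n)} (d : Sym2 (Fin n) → Fin M)
    (φ : Fin M → Fin k) :
    IsRainbowClique t (fun e => (φ (d e) : ℕ)) S ↔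
      IsRainbowClique t (fun e => (d e : ℕ)) S ∧ Set.InjOn φ (image d (cliqueEdges S)) := by
  have hval {m : ℕ} (f : Sym2 (Fin n) → Fin m) :
      Set.InjOn (fun e => (f e : ℕ)) (cliqueEdges S) ↔ Set.InjOn f (cliqueEdges S) :=
    ⟨Set.InjOn.of_comp, Fin.val_injective.comp_injOn⟩
  simp only [isRainbowClique_iff, coe_image, and_assoc, hval]
  refine and_congr_right fun _ => ⟨fun h => ⟨h.of_comp, h.image_of_comp⟩, fun h => ?_⟩
  exact h.2.comp h.1 (Set.mapsTo_image _ _)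

theorem AlmostGallai.of_forall_isRainbowClique_imp {t : ℕ} {c c' : Sym2 (Fin n) → ℕ}
    (hc : AlmostGallai t c) (h : ∀ S, IsRainbowClique t c' S → IsRainbowClique t c S) :
    AlmostGallai t c' :=
  fun S T hS hT => hc S T (h S hS) (h T hT)

open scoped Classical in
theorem rainbowCount_eq_card (t : ℕ) (c : Sym2 (Fin n) → ℕ) :
    rainbowCount t c = #{S | IsRainbowClique t c S} := by
  rw [rainbowCount, ← coe_filter_univ, Set.ncard_coe_finset]

theorem rainbowCount_le_two_pow (t : ℕ) (c : Sym2 (Fin n) → ℕ) :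
    rainbowCount t c ≤ 2 ^ n := by
  simpa [rainbowCount] using Set.ncard_le_card {S : Finset (Fin n) | IsRainbowClique t c S}

open scoped Classical in
theorem exists_recolour_descFactorial_mul_rainbowCount_le {t M k : ℕ} [NeZero k]
    (d : Sym2 (Fin n) → Fin M) :
    ∃ φ : Fin M → Fin k,
      k.descFactorial (t.choose 2) * rainbowCount t (fun e => (d e : ℕ)) ≤
        k ^ t.choose 2 * rainbowCount t (fun e => (φ (d e) : ℕ)) := by
  set m := t.choose 2
  set R : Finset (Finset (Fin n)) := {S | IsRainbowClique t (fun e => (d e : ℕ)) S}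
  set r : (Fin M → Fin k) → Finset (Fin n) → Prop :=
    fun φ S => Set.InjOn φ (image d (cliqueEdges S))
  have hcount (φ : Fin M → Fin k) :
      rainbowCount t (fun e => (φ (d e) : ℕ)) = #(R.bipartiteAbove r φ) := by
    rw [rainbowCount_eq_card, bipartiteAbove, filter_filter]
    simp only [isRainbowClique_recolour_iff, r]
  have hfiber : ∀ S ∈ R, #(univ.bipartiteBelow r S) * k ^ m = k.descFactorial m * k ^ M := by
    intro S hS
    obtain ⟨hcardS, hinj⟩ := isRainbowClique_iff.1 (mem_filter.1 hS).2
    have hcard : #(image d (cliqueEdges S)) = m := by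
      rw [card_image_of_injOn hinj.of_comp, card_cliqueEdges, hcardS]
    simpa [hcard, bipartiteBelow, r] using
      card_filter_injOn_mul_pow (β := Fin k) (image d (cliqueEdges S))
  have hsum : ∑ _φ : Fin M → Fin k, k.descFactorial m * #R =
      ∑ φ : Fin M → Fin k, k ^ m * rainbowCount t (fun e => (φ (d e) : ℕ)) := by
    calc ∑ _φ : Fin M → Fin k, k.descFactorial m * #R
        = ∑ S ∈ R, #(univ.bipartiteBelow r S) * k ^ m := by
          rw [sum_congr rfl hfiber]
          simp only [sum_const, card_univ, Fintype.card_fun, Fintype.card_fin, smul_eq_mul]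
          ring
      _ = ∑ φ : Fin M → Fin k, k ^ m * rainbowCount t (fun e => (φ (d e) : ℕ)) := by
          rw [← sum_mul, ← sum_card_bipartiteAbove_eq_sum_card_bipartiteBelow, mul_comm,
            mul_sum]
          simp only [hcount]
  obtain ⟨φ, -, hφ⟩ := exists_le_of_sum_le univ_nonempty hsum.le
  exact ⟨φ, by rwa [rainbowCount_eq_card]⟩

theorem rainbowCount_le_tau {t : ℕ} {c : Sym2 (Fin n) → ℕ} (hc : AlmostGallai t c) :
    rainbowCount t c ≤ tau t n :=
  le_csSup ⟨2 ^ n, by rintro _ ⟨c, -, rfl⟩; exact rainbowCount_le_two_pow t c⟩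
    ⟨c, hc, rfl⟩

theorem rainbowCount_le_g3 {c : Sym2 (Fin n) → ℕ} (hlt : ∀ e, c e < 3)
    (hc : AlmostGallai 3 c) :
    rainbowCount 3 c ≤ g3 n :=
  le_csSup ⟨2 ^ n, by rintro _ ⟨c, -, -, rfl⟩; exact rainbowCount_le_two_pow 3 c⟩
    ⟨c, hlt, hc, rfl⟩

theorem two_mul_rainbowCount_le_nine_mul_g3 {c : Sym2 (Fin n) → ℕ} (hc : AlmostGallai 3 c) :
    2 * rainbowCount 3 c ≤ 9 * g3 n := by
  obtain ⟨M, hM⟩ := (Set.finite_range c).bddAbove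
  let d : Sym2 (Fin n) → Fin (M + 1) := fun e => ⟨c e, Nat.lt_succ_of_le (hM ⟨e, rfl⟩)⟩
  obtain ⟨φ, hφ⟩ := exists_recolour_descFactorial_mul_rainbowCount_le (t := 3) (k := 3) d
  have hg : rainbowCount 3 (fun e => (φ (d e) : ℕ)) ≤ g3 n :=
    rainbowCount_le_g3 (fun e => (φ (d e)).isLt) <|
      hc.of_forall_isRainbowClique_imp fun S hS => ((isRainbowClique_recolour_iff d φ).1 hS).1
  have hd : (fun e => (d e : ℕ)) = c := rfl
  rw [hd, show (3 : ℕ).descFactorial (Nat.choose 3 2) = 6 from rfl,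
    show 3 ^ Nat.choose 3 2 = 27 from rfl] at hφ
  omega

theorem two_mul_tau_three_le_nine_mul_g3 : 2 * tau 3 n ≤ 9 * g3 n := by
  have h : tau 3 n ≤ 9 * g3 n / 2 := csSup_le' fun k ⟨c, hc, hk⟩ => by
    have := two_mul_rainbowCount_le_nine_mul_g3 hc
    omega
  omega

end

theorem g_le_tau_le_g (n : ℕ) :
    g3 n ≤ tau 3 n ∧ (tau 3 n : ℝ) ≤ 9 / 2 * (g3 n : ℝ) := by
  refine ⟨csSup_le' fun k ⟨c, _, hc, hk⟩ => hk ▸ rainbowCount_le_tau hc, ?_⟩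
  have h : ((2 * tau 3 n : ℕ) : ℝ) ≤ ((9 * g3 n : ℕ) : ℝ) :=
    Nat.cast_le.2 two_mul_tau_three_le_nine_mul_g3
  push_cast at h
  linarith
end

section
/- For all integers x ≥ 1 and y ≥ 0, every y-dimensional hypercube-like graph H on x vertices satisfies e(H) ≤ (1/2)·x·log₂ x. In particular, the number of edges induced by any x-element vertex subset of a y-dimensional hypercube-like graph is at most (1/2)·x·log₂ x. -/
open Finset Real

private lemma logb2_one_add {t : ℝ} (ht0 : 0 ≤ t) (ht1 : t ≤ 1) :
    t ≤ Real.logb 2 (1 + t) := by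
  have h2 : (2:ℝ) ^ t ≤ 1 + t := by
    have hc := convexOn_exp.2 (Set.mem_univ (0:ℝ)) (Set.mem_univ (Real.log 2))
      (by linarith : (0:ℝ) ≤ 1 - t) ht0 (by ring)
    simp only [smul_eq_mul, mul_zero, zero_add, Real.exp_zero,
      Real.exp_log (by norm_num : (0:ℝ) < 2)] at hc
    calc (2:ℝ) ^ t = Real.exp (t * Real.log 2) := by
          rw [Real.rpow_def_of_pos (by norm_num), mul_comm]
      _ ≤ (1 - t) * 1 + t * 2 := hc
      _ = 1 + t := by ring
  calc t = Real.logb 2 ((2:ℝ) ^ t) :=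
        (Real.logb_rpow (by norm_num) (by norm_num)).symm
    _ ≤ Real.logb 2 (1 + t) :=
        Real.logb_le_logb_of_le (by norm_num) (by positivity) h2

private lemma arith {a b : ℝ} (ha : 1 ≤ a) (hab : a ≤ b) :
    a * Real.logb 2 a + b * Real.logb 2 b + 2 * a ≤ (a + b) * Real.logb 2 (a + b) := by
  have hb : 1 ≤ b := le_trans ha hab
  have ha0 : 0 < a := by linarith
  have hb0 : 0 < b := by linarith
  have h1 : a * (1 + Real.logb 2 a) ≤ a * Real.logb 2 (a + b) := by
    apply mul_le_mul_of_nonneg_left _ (le_of_lt ha0)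
    have h2a : Real.logb 2 (2 * a) = 1 + Real.logb 2 a := by
      rw [Real.logb_mul (by norm_num) (ne_of_gt ha0),
        Real.logb_self_eq_one (by norm_num)]
    rw [← h2a]
    exact Real.logb_le_logb_of_le (by norm_num) (by positivity) (by linarith)
  have h2 : b * Real.logb 2 b + a ≤ b * Real.logb 2 (a + b) := by
    have ht1 : a / b ≤ 1 := (div_le_one hb0).2 hab
    have ht0 : 0 ≤ a / b := by positivity
    have hlog := logb2_one_add ht0 ht1
    have heq : a + b = b * (1 + a / b) := by field_simp; ring
    rw [heq, Real.logb_mul (ne_of_gt hb0) (by positivity), mul_add]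
    have hba : b * (a / b) = a := by field_simp
    nlinarith [mul_le_mul_of_nonneg_left hlog (le_of_lt hb0)]
  nlinarith [h1, h2]

private lemma key {y : ℕ} {V : Type*} [Fintype V] [DecidableEq V]
    (H : SimpleGraph V) [DecidableRel H.Adj] (P : V → Finset (Fin y))
    (h1 : ∀ u v : V, H.Adj u v → (symmDiff (P u) (P v)).card = 1)
    (h2 : ∀ S T : Finset (Fin y), (symmDiff S T).card = 1 →
      ∀ u v w : V, P u = S → P v = T → P w = T → H.Adj u v → H.Adj u w → v = w)
    (x : ℕ) : ∀ s : Finset V, s.card = x →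
    ((((s ×ˢ s).filter fun p : V × V => H.Adj p.1 p.2).card : ℝ))
      ≤ x * Real.logb 2 x := by
  induction x using Nat.strong_induction_on with
  | _ x ih =>
  intro s hs
  have hRHSnn : (0:ℝ) ≤ (x:ℝ) * Real.logb 2 (x:ℝ) := by
    rcases Nat.eq_zero_or_pos x with h | h
    · simp [h]
    · exact mul_nonneg (by positivity)
        (Real.logb_nonneg (by norm_num) (by exact_mod_cast h))
  by_cases hne : ((s ×ˢ s).filter fun p : V × V => H.Adj p.1 p.2) = ∅
  · rw [hne]; simpa using hRHSnn
  obtain ⟨p, hp⟩ := Finset.nonempty_of_ne_empty hne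
  rw [Finset.mem_filter, Finset.mem_product] at hp
  obtain ⟨⟨hu, hv⟩, hadj⟩ := hp
  -- pick the distinguished coordinate i
  have hc := h1 p.1 p.2 hadj
  obtain ⟨i, hi⟩ := Finset.card_eq_one.1 hc
  have hiin : i ∈ symmDiff (P p.1) (P p.2) := by rw [hi]; exact Finset.mem_singleton_self i
  -- helper lemmas
  have hdet : ∀ z w : V, H.Adj z w → i ∈ P z → i ∉ P w →
      P w = symmDiff (P z) {i} := by
    intro z w hzw hz hw
    obtain ⟨j, hj⟩ := Finset.card_eq_one.1 (h1 z w hzw)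
    have hij : i ∈ symmDiff (P z) (P w) := Finset.mem_symmDiff.2 (Or.inl ⟨hz, hw⟩)
    rw [hj, Finset.mem_singleton] at hij
    have : symmDiff (P z) (P w) = {i} := by rw [hj, hij]
    calc P w = symmDiff (P z) (symmDiff (P z) (P w)) :=
          (symmDiff_symmDiff_cancel_left (P z) (P w)).symm
      _ = symmDiff (P z) {i} := by rw [this]
  have hdet2 : ∀ z w : V, H.Adj z w → i ∉ P z → i ∈ P w →
      P w = symmDiff (P z) {i} := by
    intro z w hzw hz hw
    have h := hdet w z hzw.symm hw hz
    rw [h, symmDiff_symmDiff_cancel_right]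
  have huniq : ∀ z w w' : V, H.Adj z w → H.Adj z w' →
      P w = symmDiff (P z) {i} → P w' = symmDiff (P z) {i} → w = w' := by
    intro z w w' hzw hzw' hw hw'
    refine h2 (P z) (symmDiff (P z) {i}) ?_ z w w' rfl hw hw' hzw hzw'
    rw [symmDiff_symmDiff_cancel_left]
    simp
  -- the split
  set A := s.filter (fun w => i ∈ P w) with hA
  set B := s.filter (fun w => i ∉ P w) with hB
  have hABcard : A.card + B.card = x := by
    rw [hA, hB, Finset.card_filter_add_card_filter_not, hs]
  have hAne : A.Nonempty := by
    rcases Finset.mem_symmDiff.1 hiin with ⟨h₁, h₂⟩ | ⟨h₁, h₂⟩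
    · exact ⟨p.1, Finset.mem_filter.2 ⟨hu, h₁⟩⟩
    · exact ⟨p.2, Finset.mem_filter.2 ⟨hv, h₁⟩⟩
  have hBne : B.Nonempty := by
    rcases Finset.mem_symmDiff.1 hiin with ⟨h₁, h₂⟩ | ⟨h₁, h₂⟩
    · exact ⟨p.2, Finset.mem_filter.2 ⟨hv, h₂⟩⟩
    · exact ⟨p.1, Finset.mem_filter.2 ⟨hu, h₂⟩⟩
  have hA1 : 1 ≤ A.card := Finset.card_pos.2 hAne
  have hB1 : 1 ≤ B.card := Finset.card_pos.2 hBne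
  have hAx : A.card < x := by omega
  have hBx : B.card < x := by omega
  have hAmem : ∀ w ∈ A, i ∈ P w := fun w hw => (Finset.mem_filter.1 hw).2
  have hBmem : ∀ w ∈ B, i ∉ P w := fun w hw => (Finset.mem_filter.1 hw).2
  -- subset decomposition
  have hsub : ((s ×ˢ s).filter fun p : V × V => H.Adj p.1 p.2) ⊆
      (((A ×ˢ A).filter fun p : V × V => H.Adj p.1 p.2) ∪
       ((A ×ˢ B).filter fun p : V × V => H.Adj p.1 p.2)) ∪
      (((B ×ˢ A).filter fun p : V × V => H.Adj p.1 p.2) ∪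
       ((B ×ˢ B).filter fun p : V × V => H.Adj p.1 p.2)) := by
    intro q hq
    rw [Finset.mem_filter, Finset.mem_product] at hq
    obtain ⟨⟨hq1, hq2⟩, hqa⟩ := hq
    have hq1' : q.1 ∈ A ∨ q.1 ∈ B := by
      by_cases c : i ∈ P q.1
      · exact Or.inl (Finset.mem_filter.2 ⟨hq1, c⟩)
      · exact Or.inr (Finset.mem_filter.2 ⟨hq1, c⟩)
    have hq2' : q.2 ∈ A ∨ q.2 ∈ B := by
      by_cases c : i ∈ P q.2
      · exact Or.inl (Finset.mem_filter.2 ⟨hq2, c⟩)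
      · exact Or.inr (Finset.mem_filter.2 ⟨hq2, c⟩)
    rcases hq1' with h1' | h1' <;> rcases hq2' with h2' | h2'
    · exact Finset.mem_union_left _ (Finset.mem_union_left _
        (Finset.mem_filter.2 ⟨Finset.mem_product.2 ⟨h1', h2'⟩, hqa⟩))
    · exact Finset.mem_union_left _ (Finset.mem_union_right _
        (Finset.mem_filter.2 ⟨Finset.mem_product.2 ⟨h1', h2'⟩, hqa⟩))
    · exact Finset.mem_union_right _ (Finset.mem_union_left _
        (Finset.mem_filter.2 ⟨Finset.mem_product.2 ⟨h1', h2'⟩, hqa⟩))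
    · exact Finset.mem_union_right _ (Finset.mem_union_right _
        (Finset.mem_filter.2 ⟨Finset.mem_product.2 ⟨h1', h2'⟩, hqa⟩))
  -- cross bounds
  have hAB_a : ((A ×ˢ B).filter fun p : V × V => H.Adj p.1 p.2).card ≤ A.card := by
    apply Finset.card_le_card_of_injOn Prod.fst
    · intro q hq
      exact (Finset.mem_product.1 (Finset.mem_filter.1 hq).1).1
    · intro q hq r hr hqr
      rw [Finset.mem_coe, Finset.mem_filter, Finset.mem_product] at hq hr
      have e1 := hdet q.1 q.2 hq.2 (hAmem _ hq.1.1) (hBmem _ hq.1.2)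
      have e2 := hdet r.1 r.2 hr.2 (hAmem _ hr.1.1) (hBmem _ hr.1.2)
      rw [← hqr] at e2
      exact Prod.ext hqr (huniq q.1 q.2 r.2 hq.2 (hqr ▸ hr.2) e1 e2)
  have hAB_b : ((A ×ˢ B).filter fun p : V × V => H.Adj p.1 p.2).card ≤ B.card := by
    apply Finset.card_le_card_of_injOn Prod.snd
    · intro q hq
      exact (Finset.mem_product.1 (Finset.mem_filter.1 hq).1).2
    · intro q hq r hr hqr
      rw [Finset.mem_coe, Finset.mem_filter, Finset.mem_product] at hq hr
      have e1 := hdet2 q.2 q.1 hq.2.symm (hBmem _ hq.1.2) (hAmem _ hq.1.1)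
      have e2 := hdet2 r.2 r.1 hr.2.symm (hBmem _ hr.1.2) (hAmem _ hr.1.1)
      rw [← hqr] at e2
      exact Prod.ext (huniq q.2 q.1 r.1 hq.2.symm (hqr ▸ hr.2.symm) e1 e2) hqr
  have hBA_a : ((B ×ˢ A).filter fun p : V × V => H.Adj p.1 p.2).card ≤ A.card := by
    apply Finset.card_le_card_of_injOn Prod.snd
    · intro q hq
      exact (Finset.mem_product.1 (Finset.mem_filter.1 hq).1).2
    · intro q hq r hr hqr
      rw [Finset.mem_coe, Finset.mem_filter, Finset.mem_product] at hq hr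
      have e1 := hdet q.2 q.1 hq.2.symm (hAmem _ hq.1.2) (hBmem _ hq.1.1)
      have e2 := hdet r.2 r.1 hr.2.symm (hAmem _ hr.1.2) (hBmem _ hr.1.1)
      rw [← hqr] at e2
      exact Prod.ext (huniq q.2 q.1 r.1 hq.2.symm (hqr ▸ hr.2.symm) e1 e2) hqr
  have hBA_b : ((B ×ˢ A).filter fun p : V × V => H.Adj p.1 p.2).card ≤ B.card := by
    apply Finset.card_le_card_of_injOn Prod.fst
    · intro q hq
      exact (Finset.mem_product.1 (Finset.mem_filter.1 hq).1).1
    · intro q hq r hr hqr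
      rw [Finset.mem_coe, Finset.mem_filter, Finset.mem_product] at hq hr
      have e1 := hdet2 q.1 q.2 hq.2 (hBmem _ hq.1.1) (hAmem _ hq.1.2)
      have e2 := hdet2 r.1 r.2 hr.2 (hBmem _ hr.1.1) (hAmem _ hr.1.2)
      rw [← hqr] at e2
      exact Prod.ext hqr (huniq q.1 q.2 r.2 hq.2 (hqr ▸ hr.2) e1 e2)
  -- inductive hypotheses
  have ihA := ih A.card hAx A rfl
  have ihB := ih B.card hBx B rfl
  -- cardinality chain
  have hcard_le : ((s ×ˢ s).filter fun p : V × V => H.Adj p.1 p.2).card ≤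
      ((A ×ˢ A).filter fun p : V × V => H.Adj p.1 p.2).card +
      ((A ×ˢ B).filter fun p : V × V => H.Adj p.1 p.2).card +
      (((B ×ˢ A).filter fun p : V × V => H.Adj p.1 p.2).card +
      ((B ×ˢ B).filter fun p : V × V => H.Adj p.1 p.2).card) := by
    calc _ ≤ _ := Finset.card_le_card hsub
      _ ≤ _ := by
        refine le_trans (Finset.card_union_le _ _) ?_
        exact add_le_add (Finset.card_union_le _ _) (Finset.card_union_le _ _)
  set a := A.card
  set b := B.card
  have hxab : (x:ℝ) = (a:ℝ) + (b:ℝ) := by exact_mod_cast hABcard.symm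
  rcases le_total a b with hab | hab
  · have harith := arith (a := (a:ℝ)) (b := (b:ℝ))
      (by exact_mod_cast hA1) (by exact_mod_cast hab)
    have c1 : (((A ×ˢ B).filter fun p : V × V => H.Adj p.1 p.2).card : ℝ) ≤ a := by
      exact_mod_cast hAB_a
    have c2 : (((B ×ˢ A).filter fun p : V × V => H.Adj p.1 p.2).card : ℝ) ≤ a := by
      exact_mod_cast hBA_a
    have hle : (((s ×ˢ s).filter fun p : V × V => H.Adj p.1 p.2).card : ℝ) ≤
        (a:ℝ) * Real.logb 2 a + (b:ℝ) * Real.logb 2 b + 2 * a := by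
      have := hcard_le
      have hcast : (((s ×ˢ s).filter fun p : V × V => H.Adj p.1 p.2).card : ℝ) ≤
          (((A ×ˢ A).filter fun p : V × V => H.Adj p.1 p.2).card : ℝ) +
          (((A ×ˢ B).filter fun p : V × V => H.Adj p.1 p.2).card : ℝ) +
          ((((B ×ˢ A).filter fun p : V × V => H.Adj p.1 p.2).card : ℝ) +
          (((B ×ˢ B).filter fun p : V × V => H.Adj p.1 p.2).card : ℝ)) := by
        exact_mod_cast this
      linarith [ihA, ihB, c1, c2, hcast]
    rw [hxab]
    linarith [harith]
  · have harith := arith (a := (b:ℝ)) (b := (a:ℝ))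
      (by exact_mod_cast hB1) (by exact_mod_cast hab)
    have c1 : (((A ×ˢ B).filter fun p : V × V => H.Adj p.1 p.2).card : ℝ) ≤ b := by
      exact_mod_cast hAB_b
    have c2 : (((B ×ˢ A).filter fun p : V × V => H.Adj p.1 p.2).card : ℝ) ≤ b := by
      exact_mod_cast hBA_b
    have hle : (((s ×ˢ s).filter fun p : V × V => H.Adj p.1 p.2).card : ℝ) ≤
        (a:ℝ) * Real.logb 2 a + (b:ℝ) * Real.logb 2 b + 2 * b := by
      have := hcard_le
      have hcast : (((s ×ˢ s).filter fun p : V × V => H.Adj p.1 p.2).card : ℝ) ≤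
          (((A ×ˢ A).filter fun p : V × V => H.Adj p.1 p.2).card : ℝ) +
          (((A ×ˢ B).filter fun p : V × V => H.Adj p.1 p.2).card : ℝ) +
          ((((B ×ˢ A).filter fun p : V × V => H.Adj p.1 p.2).card : ℝ) +
          (((B ×ˢ B).filter fun p : V × V => H.Adj p.1 p.2).card : ℝ)) := by
        exact_mod_cast this
      linarith [ihA, ihB, c1, c2, hcast]
    rw [hxab]
    have hba : (b:ℝ) + (a:ℝ) = (a:ℝ) + (b:ℝ) := by ring
    rw [hba] at harith
    linarith [harith]

/-- A graph `H` is `y`-dimensional hypercube-like if its vertex set can be partitioned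
into parts `V_S` indexed by the subsets `S ⊆ [y]` (we record the partition by the map
`P` sending each vertex to the index of its part) such that:
(1) every edge joins parts `V_S`, `V_T` with `|S △ T| = 1`, and
(2) for all `S, T ⊆ [y]` with `|S △ T| = 1`, the edges between `V_S` and `V_T`
form a (possibly empty) matching. -/
def HypercubeLike {V : Type*} (H : SimpleGraph V) (y : ℕ) : Prop :=
  ∃ P : V → Finset (Fin y),
    (∀ u v : V, H.Adj u v → (symmDiff (P u) (P v)).card = 1) ∧
    (∀ S T : Finset (Fin y), (symmDiff S T).card = 1 →
      ∀ u v w : V, P u = S → P v = T → P w = T → H.Adj u v → H.Adj u w → v = w)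

theorem hypercubeLike_edge_bound (x y : ℕ) (hx : 1 ≤ x) (V : Type*) [Fintype V]
    (H : SimpleGraph V) (hH : HypercubeLike H y) (hcard : Fintype.card V = x) :
    (H.edgeSet.ncard : ℝ) ≤ 1 / 2 * (x : ℝ) * Real.logb 2 (x : ℝ) := by
  classical
  obtain ⟨P, h1, h2⟩ := hH
  have hkey := key H P h1 h2 x Finset.univ (by rw [Finset.card_univ, hcard])
  have h2m : 2 * H.edgeFinset.card =
      ((Finset.univ ×ˢ Finset.univ).filter fun p : V × V => H.Adj p.1 p.2).card := by
    rw [SimpleGraph.two_mul_card_edgeFinset]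
    congr 1
  have hnc : H.edgeSet.ncard = H.edgeFinset.card := by
    rw [SimpleGraph.edgeFinset, Set.ncard_eq_toFinset_card']
  have h2m' : 2 * (H.edgeSet.ncard : ℝ) ≤ (x:ℝ) * Real.logb 2 (x:ℝ) := by
    rw [hnc]
    calc 2 * (H.edgeFinset.card : ℝ)
        = (((Finset.univ ×ˢ Finset.univ).filter
            fun p : V × V => H.Adj p.1 p.2).card : ℝ) := by exact_mod_cast h2m
      _ ≤ _ := hkey
  linarith
end

section
/- Let c : E(K_n) → {R, G, B} be an almost 3-Gallai colouring with three colours and let V(K_n) = X ∪ Y be a partition of the vertex set with |X| ≥ 2 such that no edge between X and Y is green. Then the number of rainbow triangles y·x₁·x₂ with y ∈ Y, x₁, x₂ ∈ X and the edge x₁x₂ coloured green is at most (1/2)·|X|·log₂|X|. -/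
/-- A set `S` of vertices of `K_n` is a rainbow triangle for the edge colouring
`c : E(K_n) → {R, B, G}` (colours modelled by `Fin 3`, with red = 0, blue = 1,
green = 2) if it has `3` vertices and its three edges have pairwise distinct colours. -/
def IsRainbowTri {n : ℕ} (c : Sym2 (Fin n) → Fin 3) (S : Finset (Fin n)) : Prop :=
  S.card = 3 ∧
    ∀ a ∈ S, ∀ b ∈ S, ∀ x ∈ S, ∀ y ∈ S,
      a ≠ b → x ≠ y → s(a, b) ≠ s(x, y) → c s(a, b) ≠ c s(x, y)

/-- A three-colouring of `E(K_n)` is almost (3-)Gallai if no two (distinct) rainbow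
triangles share an edge. -/
def AlmostGallai3 {n : ℕ} (c : Sym2 (Fin n) → Fin 3) : Prop :=
  ∀ S T : Finset (Fin n), IsRainbowTri c S → IsRainbowTri c T → S ≠ T →
    ∀ a b : Fin n, a ≠ b → a ∈ S → b ∈ S → a ∈ T → b ∈ T → False



lemma log_one_add (x : ℝ) (h0 : 0 ≤ x) (h1 : x ≤ 1) : x ≤ Real.logb 2 (1+x) := by
  have hexp : Real.exp (x * Real.log 2) ≤ 1 + x := by
    have := convexOn_exp.2 (Set.mem_univ (0:ℝ)) (Set.mem_univ (Real.log 2))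
      (by linarith : (0:ℝ) ≤ 1 - x) h0 (by ring)
    simp only [smul_eq_mul, mul_zero, zero_add, Real.exp_zero, mul_one,
      Real.exp_log two_pos] at this
    calc Real.exp (x * Real.log 2) = Real.exp ((1-x)*0 + x * Real.log 2) := by ring_nf
      _ ≤ (1-x) * 1 + x * 2 := by simpa using this
      _ = 1 + x := by ring
  have hlog : x * Real.log 2 ≤ Real.log (1+x) := by
    have := Real.log_le_log (Real.exp_pos _) hexp
    rwa [Real.log_exp] at this
  rw [Real.logb, le_div_iff₀ (Real.log_pos one_lt_two)]
  exact hlog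

lemma numeric_le (a b : ℕ) (ha : 1 ≤ a) (hab : a ≤ b) :
    (a:ℝ) + 1/2*a*Real.logb 2 a + 1/2*b*Real.logb 2 b
      ≤ 1/2*((a:ℝ)+b)*Real.logb 2 ((a:ℝ)+b) := by
  have ha' : (1:ℝ) ≤ a := by exact_mod_cast ha
  have hb' : (1:ℝ) ≤ b := le_trans ha' (by exact_mod_cast hab)
  have hab' : (a:ℝ) ≤ b := by exact_mod_cast hab
  have hapos : (0:ℝ) < a := by linarith
  have hbpos : (0:ℝ) < b := by linarith
  have l1 : Real.logb 2 a + 1 ≤ Real.logb 2 ((a:ℝ)+b) := by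
    have h2a : Real.logb 2 (2*a) ≤ Real.logb 2 ((a:ℝ)+b) :=
      Real.logb_le_logb_of_le one_lt_two (by positivity) (by linarith)
    rwa [Real.logb_mul (by norm_num) (by positivity), Real.logb_self_eq_one one_lt_two,
      add_comm] at h2a
  have l2 : (a:ℝ) ≤ b * (Real.logb 2 ((a:ℝ)+b) - Real.logb 2 b) := by
    have hdiv : Real.logb 2 ((a:ℝ)+b) - Real.logb 2 b = Real.logb 2 (1 + a/b) := by
      rw [← Real.logb_div (by positivity) (by positivity)]
      congr 1
      field_simp
      ring
    have hle : (a:ℝ)/b ≤ Real.logb 2 (1 + a/b) :=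
      log_one_add _ (by positivity) (by rw [div_le_one hbpos]; exact hab')
    rw [hdiv]
    calc (a:ℝ) = b * (a/b) := by field_simp
      _ ≤ b * Real.logb 2 (1 + a/b) := by
          exact mul_le_mul_of_nonneg_left hle (le_of_lt hbpos)
  have l1' : 1/2*(a:ℝ)*Real.logb 2 a ≤ 1/2*a*(Real.logb 2 ((a:ℝ)+b) - 1) := by
    have := mul_le_mul_of_nonneg_left l1 (by positivity : (0:ℝ) ≤ 1/2*a)
    nlinarith [this]
  nlinarith [l1', l2]

lemma numeric (a b : ℕ) (ha : 1 ≤ a) (hb : 1 ≤ b) :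
    (min a b : ℝ) + 1/2*a*Real.logb 2 a + 1/2*b*Real.logb 2 b
      ≤ 1/2*((a:ℝ)+b)*Real.logb 2 ((a:ℝ)+b) := by
  rcases le_total a b with h | h
  · rw [min_eq_left (by exact_mod_cast h : (a:ℝ) ≤ b)]
    exact numeric_le a b ha h
  · rw [min_eq_right (by exact_mod_cast h : (b:ℝ) ≤ a)]
    calc (b:ℝ) + 1/2*a*Real.logb 2 a + 1/2*b*Real.logb 2 b
        = (b:ℝ) + 1/2*b*Real.logb 2 b + 1/2*a*Real.logb 2 a := by ring
      _ ≤ 1/2*((b:ℝ)+a)*Real.logb 2 ((b:ℝ)+a) := numeric_le b a hb h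
      _ = 1/2*((a:ℝ)+b)*Real.logb 2 ((a:ℝ)+b) := by ring_nf




lemma fin3_ne {p q : Fin 3} (h : p ≠ q) (hp : p ≠ 2) (hq : q ≠ 2) :
    decide (p = 1) ≠ decide (q = 1) := by revert h hp hq; revert p q; decide

lemma fin3_ne' {p q : Fin 3} (h : decide (p = 1) ≠ decide (q = 1)) : p ≠ q := by
  intro hpq; exact h (by rw [hpq])

lemma mk_rainbow {n : ℕ} (c : Sym2 (Fin n) → Fin 3) (p q r : Fin n)
    (hpq : p ≠ q) (hpr : p ≠ r) (hqr : q ≠ r)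
    (h1 : c s(p,q) ≠ c s(p,r)) (h2 : c s(p,q) ≠ c s(q,r)) (h3 : c s(p,r) ≠ c s(q,r)) :
    IsRainbowTri c {p, q, r} := by
  constructor
  · rw [Finset.card_insert_of_notMem (by simp [hpq, hpr]),
      Finset.card_insert_of_notMem (by simp [hqr])]
    rfl
  · intro a ha b hb x hx y hy hab hxy hne
    simp only [Finset.mem_insert, Finset.mem_singleton] at ha hb hx hy
    rcases ha with rfl | rfl | rfl <;> rcases hb with rfl | rfl | rfl <;>
      rcases hx with rfl | rfl | rfl <;> rcases hy with rfl | rfl | rfl <;>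
      simp_all [Sym2.eq_swap, eq_comm]

lemma pair_color {n : ℕ} (c : Sym2 (Fin n) → Fin 3) (x₁ x₂ u v : Fin n)
    (h : ({u, v} : Finset (Fin n)) = {x₁, x₂}) (hc2 : c s(x₁, x₂) = 2) :
    c s(u, v) = 2 := by
  have hu : u ∈ ({x₁, x₂} : Finset (Fin n)) := by rw [← h]; simp
  have hv : v ∈ ({x₁, x₂} : Finset (Fin n)) := by rw [← h]; simp
  have hx1 : x₁ ∈ ({u, v} : Finset (Fin n)) := by rw [h]; simp
  have hx2 : x₂ ∈ ({u, v} : Finset (Fin n)) := by rw [h]; simp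
  simp only [Finset.mem_insert, Finset.mem_singleton] at hu hv hx1 hx2
  suffices heq : s(u, v) = s(x₁, x₂) by rw [heq]; exact hc2
  rw [Sym2.eq_iff]
  rcases hu with rfl | rfl <;> rcases hv with rfl | rfl <;> simp_all


section KeyLemma
open Finset

lemma key_s10 {V A : Type*} [DecidableEq V] (side : A → V → Bool) :
    ∀ m : ℕ, ∀ X : Finset V, X.card ≤ m →
    ∀ (E : Finset (Finset V)) (ap : Finset V → A),
    (∀ e ∈ E, e ⊆ X ∧ e.card = 2) →
    (∀ e ∈ E, ∃ u ∈ e, ∃ v ∈ e, side (ap e) u ≠ side (ap e) v) →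
    (∀ e ∈ E, ∀ e' ∈ E, e ≠ e' → ap e ≠ ap e' →
        ∀ u ∈ e', ∀ v ∈ e', side (ap e) u = side (ap e) v) →
    (∀ e ∈ E, ∀ e' ∈ E, e ≠ e' → ap e = ap e' → ∀ w ∈ e, w ∈ e' → False) →
    (E.card : ℝ) ≤ 1/2 * X.card * Real.logb 2 X.card := by
  intro m
  induction m with
  | zero =>
    intro X hX E ap h1 h2 h3 h4
    -- X empty so E empty
    have hE : E = ∅ := by
      rw [eq_empty_iff_forall_notMem]
      intro e he
      have := (h1 e he).2
      have hsub := (h1 e he).1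
      have : e.card ≤ X.card := card_le_card hsub
      omega
    rw [hE]
    have : (0:ℝ) ≤ 1/2 * X.card * Real.logb 2 X.card := by
      rcases Nat.eq_zero_or_pos X.card with h | h
      · simp [h]
      · have : (1:ℝ) ≤ X.card := by exact_mod_cast h
        have := Real.logb_nonneg one_lt_two this
        positivity
    simpa using this
  | succ m ih =>
    intro X hX E ap h1 h2 h3 h4
    classical
    rcases E.eq_empty_or_nonempty with hE | ⟨e₀, he₀⟩
    · -- trivial
      have : (0:ℝ) ≤ 1/2 * X.card * Real.logb 2 X.card := by
        rcases Nat.eq_zero_or_pos X.card with h | h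
        · simp [h]
        · have : (1:ℝ) ≤ X.card := by exact_mod_cast h
          have := Real.logb_nonneg one_lt_two this
          positivity
      simpa [hE] using this
    · set a := ap e₀ with ha
      set A := X.filter (fun v => side a v = true) with hA
      set B := X.filter (fun v => side a v = false) with hB
      obtain ⟨u₀, hu₀e, v₀, hv₀e, huv₀⟩ := h2 e₀ he₀
      have he₀X : e₀ ⊆ X := (h1 e₀ he₀).1
      -- A, B nonempty
      have hABmem : ∀ v ∈ X, v ∈ A ∨ v ∈ B := by
        intro v hv
        by_cases h : side a v = true
        · exact Or.inl (mem_filter.mpr ⟨hv, h⟩)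
        · exact Or.inr (mem_filter.mpr ⟨hv, by simpa using h⟩)
      have hAne : A.Nonempty := by
        rcases Bool.eq_false_or_eq_true (side a u₀) with h | h
        · exact ⟨u₀, mem_filter.mpr ⟨he₀X hu₀e, h⟩⟩
        · rcases Bool.eq_false_or_eq_true (side a v₀) with h' | h'
          · exact ⟨v₀, mem_filter.mpr ⟨he₀X hv₀e, h'⟩⟩
          · exact absurd (h.trans h'.symm) huv₀
      have hBne : B.Nonempty := by
        rcases Bool.eq_false_or_eq_true (side a u₀) with h | h
        · rcases Bool.eq_false_or_eq_true (side a v₀) with h' | h'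
          · exact absurd (h.trans h'.symm) huv₀
          · exact ⟨v₀, mem_filter.mpr ⟨he₀X hv₀e, h'⟩⟩
        · exact ⟨u₀, mem_filter.mpr ⟨he₀X hu₀e, h⟩⟩
      have hcard : A.card + B.card = X.card := by
        rw [hA, hB]
        simpa using card_filter_add_card_filter_not (s := X)
          (p := fun v => side a v = true)
      -- decomposition
      set EC := E.filter (fun e => ap e = a) with hEC
      set EA := E.filter (fun e => ap e ≠ a ∧ e ⊆ A) with hEA
      set EB := E.filter (fun e => ap e ≠ a ∧ e ⊆ B) with hEB
      have hsameside : ∀ e ∈ E, ap e ≠ a → (e ⊆ A ∨ e ⊆ B) := by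
        intro e he hne
        obtain ⟨u, hu⟩ : e.Nonempty := card_pos.mp (by rw [(h1 e he).2]; norm_num)
        have hall : ∀ v ∈ e, side a v = side a u := by
          intro v hv
          exact (h3 e₀ he₀ e he (fun h => hne (h ▸ rfl)) (fun h => hne h.symm) v hv u hu)
        rcases Bool.eq_false_or_eq_true (side a u) with h | h
        · left; intro v hv
          exact mem_filter.mpr ⟨(h1 e he).1 hv, (hall v hv).trans h⟩
        · right; intro v hv
          exact mem_filter.mpr ⟨(h1 e he).1 hv, (hall v hv).trans h⟩
      have hdecomp : E = EC ∪ EA ∪ EB := by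
        ext e
        simp only [hEC, hEA, hEB, mem_union, mem_filter]
        constructor
        · intro he
          by_cases hape : ap e = a
          · exact Or.inl (Or.inl ⟨he, hape⟩)
          · rcases hsameside e he hape with h | h
            · exact Or.inl (Or.inr ⟨he, hape, h⟩)
            · exact Or.inr ⟨he, hape, h⟩
        · rintro ((⟨he, _⟩ | ⟨he, _⟩) | ⟨he, _⟩) <;> exact he
      have hd1 : Disjoint EC EA := by
        rw [disjoint_left]
        intro e he he'
        exact ((mem_filter.mp he').2).1 ((mem_filter.mp he).2)
      have hd2 : Disjoint EC EB := by
        rw [disjoint_left]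
        intro e he he'
        exact ((mem_filter.mp he').2).1 ((mem_filter.mp he).2)
      have hd3 : Disjoint EA EB := by
        rw [disjoint_left]
        intro e he he'
        obtain ⟨heE, _, heA⟩ := mem_filter.mp he
        obtain ⟨_, _, heB⟩ := mem_filter.mp he'
        obtain ⟨u, hu⟩ : e.Nonempty := card_pos.mp (by rw [(h1 e heE).2]; norm_num)
        have h1' := (mem_filter.mp (heA hu)).2
        have h2' := (mem_filter.mp (heB hu)).2
        simp [h1'] at h2'
      have hcardsum : E.card = EC.card + EA.card + EB.card := by
        rw [hdecomp, card_union_of_disjoint, card_union_of_disjoint hd1]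
        rw [disjoint_union_left]
        exact ⟨hd2, hd3⟩
      -- EC bound
      have hECbound : ∀ (sd : Bool) (C : Finset V), C = X.filter (fun v => side a v = sd) →
          EC.card ≤ C.card := by
        intro sd C hC
        have : ∀ e ∈ EC, ∃ u ∈ e, side a u = sd := by
          intro e he
          obtain ⟨heE, hape⟩ := mem_filter.mp he
          obtain ⟨u, hu, v, hv, huv⟩ := h2 e heE
          rw [hape] at huv
          rcases Bool.eq_false_or_eq_true sd with h | h
          · rcases Bool.eq_false_or_eq_true (side a u) with h' | h'
            · exact ⟨u, hu, h'.trans h.symm⟩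
            · refine ⟨v, hv, ?_⟩
              rcases Bool.eq_false_or_eq_true (side a v) with h'' | h''
              · exact h''.trans h.symm
              · exact absurd (h'.trans h''.symm) huv
          · rcases Bool.eq_false_or_eq_true (side a u) with h' | h'
            · refine ⟨v, hv, ?_⟩
              rcases Bool.eq_false_or_eq_true (side a v) with h'' | h''
              · exact absurd (h'.trans h''.symm) huv
              · exact h''.trans h.symm
            · exact ⟨u, hu, h'.trans h.symm⟩
        classical
        set f : Finset V → V := fun e =>
          if h : ∃ u, u ∈ e ∧ side a u = sd then h.choose else u₀ with hf
        have hfmem : ∀ e ∈ EC, f e ∈ e ∧ side a (f e) = sd := by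
          intro e he
          obtain ⟨u, hu, hs⟩ := this e he
          have hex : ∃ u, u ∈ e ∧ side a u = sd := ⟨u, hu, hs⟩
          simp only [hf, dif_pos hex]
          exact hex.choose_spec
        apply card_le_card_of_injOn f
        · intro e he
          obtain ⟨hmem, hside⟩ := hfmem e he
          rw [hC]
          exact mem_filter.mpr ⟨(h1 e (mem_of_mem_filter e he)).1 hmem, hside⟩
        · intro e he e' he' hfe
          by_contra hne
          obtain ⟨hmem, _⟩ := hfmem e he
          obtain ⟨hmem', _⟩ := hfmem e' he'
          exact h4 e (mem_of_mem_filter e he) e' (mem_of_mem_filter e' he') hne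
            (((mem_filter.mp he).2).trans ((mem_filter.mp he').2).symm)
            (f e) hmem (hfe ▸ hmem')
      have hECA : EC.card ≤ A.card := hECbound true A hA
      have hECB : EC.card ≤ B.card := hECbound false B hB
      -- inductive bounds on EA, EB
      have hAcard : A.card ≤ m := by
        have : 1 ≤ B.card := card_pos.mpr hBne
        omega
      have hBcard : B.card ≤ m := by
        have : 1 ≤ A.card := card_pos.mpr hAne
        omega
      have hEAsub : EA ⊆ E := filter_subset _ _
      have hEBsub : EB ⊆ E := filter_subset _ _
      have hEAbound : (EA.card : ℝ) ≤ 1/2 * A.card * Real.logb 2 A.card := by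
        apply ih A hAcard EA ap
        · intro e he
          exact ⟨(mem_filter.mp he).2.2, (h1 e (hEAsub he)).2⟩
        · intro e he; exact h2 e (hEAsub he)
        · intro e he e' he'; exact h3 e (hEAsub he) e' (hEAsub he')
        · intro e he e' he'; exact h4 e (hEAsub he) e' (hEAsub he')
      have hEBbound : (EB.card : ℝ) ≤ 1/2 * B.card * Real.logb 2 B.card := by
        apply ih B hBcard EB ap
        · intro e he
          exact ⟨(mem_filter.mp he).2.2, (h1 e (hEBsub he)).2⟩
        · intro e he; exact h2 e (hEBsub he)
        · intro e he e' he'; exact h3 e (hEBsub he) e' (hEBsub he')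
        · intro e he e' he'; exact h4 e (hEBsub he) e' (hEBsub he')
      -- combine
      have hA1 : 1 ≤ A.card := card_pos.mpr hAne
      have hB1 : 1 ≤ B.card := card_pos.mpr hBne
      have hnum := numeric A.card B.card hA1 hB1
      have hmin : (EC.card : ℝ) ≤ min (A.card : ℝ) (B.card : ℝ) := by
        apply le_min <;> exact_mod_cast (by assumption)
      have hfin : ((A.card : ℝ) + B.card) = X.card := by exact_mod_cast hcard
      calc (E.card : ℝ) = (EC.card : ℝ) + EA.card + EB.card := by exact_mod_cast hcardsum
        _ ≤ min (A.card : ℝ) (B.card : ℝ) + 1/2 * A.card * Real.logb 2 A.card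
            + 1/2 * B.card * Real.logb 2 B.card := by
            gcongr
        _ ≤ 1/2*((A.card:ℝ)+B.card)*Real.logb 2 ((A.card:ℝ)+B.card) := hnum
        _ = 1/2 * X.card * Real.logb 2 X.card := by rw [hfin]

end KeyLemma


theorem lemma_no_green_between (n : ℕ) (c : Sym2 (Fin n) → Fin 3)
    (hc : AlmostGallai3 c) (X Y : Finset (Fin n)) (hdisj : Disjoint X Y)
    (hcover : X ∪ Y = Finset.univ) (hX : 2 ≤ X.card)
    (hnogreen : ∀ x ∈ X, ∀ y ∈ Y, c s(x, y) ≠ 2) :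
    (({S : Finset (Fin n) | IsRainbowTri c S ∧
        ∃ x₁ ∈ X, ∃ x₂ ∈ X, ∃ y ∈ Y, x₁ ≠ x₂ ∧ S = {x₁, x₂, y} ∧
          c s(x₁, x₂) = 2}).ncard : ℝ) ≤
      1 / 2 * (X.card : ℝ) * Real.logb 2 (X.card : ℝ) := by
  classical
  obtain ⟨x₀, hx₀⟩ : X.Nonempty := Finset.card_pos.mp (by omega)
  have hXY : ∀ z, z ∈ X → z ∈ Y → False := fun z hx hy =>
    (Finset.disjoint_left.mp hdisj hx) hy
  set P : Finset (Fin n) → Prop := fun S => IsRainbowTri c S ∧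
      ∃ x₁ ∈ X, ∃ x₂ ∈ X, ∃ y ∈ Y, x₁ ≠ x₂ ∧ S = {x₁, x₂, y} ∧
        c s(x₁, x₂) = 2 with hPdef
  set Tset : Finset (Finset (Fin n)) := Finset.univ.filter P with hTdef
  have hsetT : {S : Finset (Fin n) | IsRainbowTri c S ∧
      ∃ x₁ ∈ X, ∃ x₂ ∈ X, ∃ y ∈ Y, x₁ ≠ x₂ ∧ S = {x₁, x₂, y} ∧
        c s(x₁, x₂) = 2} = ↑Tset := by
    ext S
    simp [hTdef, hPdef]
  rw [hsetT, Set.ncard_coe_finset]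
  -- finset intersection helpers
  have hinter : ∀ x₁ x₂ y : Fin n, x₁ ∈ X → x₂ ∈ X → y ∈ Y →
      ({x₁, x₂, y} : Finset (Fin n)) ∩ X = {x₁, x₂} := by
    intro x₁ x₂ y hx₁ hx₂ hy
    ext z
    simp only [Finset.mem_inter, Finset.mem_insert, Finset.mem_singleton]
    constructor
    · rintro ⟨rfl | rfl | rfl, hzX⟩
      · exact Or.inl rfl
      · exact Or.inr rfl
      · exact absurd hy (fun h => hXY z hzX h)
    · rintro (rfl | rfl)
      · exact ⟨Or.inl rfl, hx₁⟩
      · exact ⟨Or.inr (Or.inl rfl), hx₂⟩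
  have hinsert : ∀ (e : Finset (Fin n)) (y : Fin n), e ⊆ X → y ∈ Y →
      (insert y e) ∩ X = e := by
    intro e y he hy
    ext z
    simp only [Finset.mem_inter, Finset.mem_insert]
    constructor
    · rintro ⟨rfl | hz, hzX⟩
      · exact absurd hy (fun h => hXY z hzX h)
      · exact hz
    · intro hz
      exact ⟨Or.inr hz, he hz⟩
  have hmemT : ∀ S ∈ Tset, IsRainbowTri c S ∧
      ∃ x₁ ∈ X, ∃ x₂ ∈ X, ∃ y ∈ Y, x₁ ≠ x₂ ∧ S = {x₁, x₂, y} ∧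
        c s(x₁, x₂) = 2 := by
    intro S hS
    exact (Finset.mem_filter.mp hS).2
  set E : Finset (Finset (Fin n)) := Tset.image (fun S => S ∩ X) with hEdef
  -- injectivity
  have hinj : Set.InjOn (fun S => S ∩ X) ↑Tset := by
    intro S hS S' hS' h
    simp only [Finset.mem_coe] at hS hS'
    obtain ⟨rS, x₁, hx₁, x₂, hx₂, y, hy, hne12, hSeq, -⟩ := hmemT S hS
    obtain ⟨rS', x₁', hx₁', x₂', hx₂', y', hy', hne12', hSeq', -⟩ := hmemT S' hS'
    simp only at h
    have hins : ∀ (a b w : Fin n), ({a, b, w} : Finset (Fin n)) = insert w {a, b} := by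
      intro a b w
      ext z
      simp only [Finset.mem_insert, Finset.mem_singleton]
      tauto
    have e1 : S ∩ X = ({x₁, x₂} : Finset (Fin n)) := by
      rw [hSeq]; exact hinter x₁ x₂ y hx₁ hx₂ hy
    have e2 : S' ∩ X = ({x₁', x₂'} : Finset (Fin n)) := by
      rw [hSeq']; exact hinter x₁' x₂' y' hx₁' hx₂' hy'
    by_cases hyy : y = y'
    · rw [hSeq, hSeq', hins x₁ x₂ y, hins x₁' x₂' y', ← e1, ← e2, h, hyy]
    · exfalso
      have hSS' : S ≠ S' := by
        intro hEq
        have hyS : y ∈ S := by rw [hSeq]; simp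
        rw [hEq, hSeq'] at hyS
        simp only [Finset.mem_insert, Finset.mem_singleton] at hyS
        rcases hyS with rfl | rfl | rfl
        · exact hXY y hx₁' hy
        · exact hXY y hx₂' hy
        · exact hyy rfl
      have hx₁S : x₁ ∈ S := by rw [hSeq]; simp
      have hx₂S : x₂ ∈ S := by rw [hSeq]; simp
      have hx₁S' : x₁ ∈ S' := by
        have : x₁ ∈ S ∩ X := Finset.mem_inter.mpr ⟨hx₁S, hx₁⟩
        rw [h] at this
        exact (Finset.mem_inter.mp this).1
      have hx₂S' : x₂ ∈ S' := by
        have : x₂ ∈ S ∩ X := Finset.mem_inter.mpr ⟨hx₂S, hx₂⟩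
        rw [h] at this
        exact (Finset.mem_inter.mp this).1
      exact hc S S' rS rS' hSS' x₁ x₂ hne12 hx₁S hx₂S hx₁S' hx₂S'
  have hcardTE : E.card = Tset.card := Finset.card_image_of_injOn hinj
  -- apex function
  set ap : Finset (Fin n) → Fin n := fun e =>
    if h : ∃ y, y ∈ Y ∧ insert y e ∈ Tset then h.choose else x₀ with hapdef
  have hap : ∀ e ∈ E, ap e ∈ Y ∧ insert (ap e) e ∈ Tset := by
    intro e he
    obtain ⟨S, hS, hSe⟩ := Finset.mem_image.mp he
    obtain ⟨rS, x₁, hx₁, x₂, hx₂, y, hy, hne12, hSeq, -⟩ := hmemT S hS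
    have heq : e = ({x₁, x₂} : Finset (Fin n)) := by
      rw [← hSe, hSeq, hinter x₁ x₂ y hx₁ hx₂ hy]
    have hins : insert y e = S := by
      rw [heq, hSeq]
      ext z
      simp only [Finset.mem_insert, Finset.mem_singleton]
      tauto
    have hex : ∃ y, y ∈ Y ∧ insert y e ∈ Tset := ⟨y, hy, by rw [hins]; exact hS⟩
    rw [hapdef]
    simp only [dif_pos hex]
    exact hex.choose_spec
  have hE2 : ∀ e ∈ E, e ⊆ X ∧ e.card = 2 := by
    intro e he
    obtain ⟨S, hS, hSe⟩ := Finset.mem_image.mp he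
    obtain ⟨rS, x₁, hx₁, x₂, hx₂, y, hy, hne12, hSeq, -⟩ := hmemT S hS
    have heq : e = ({x₁, x₂} : Finset (Fin n)) := by
      rw [← hSe, hSeq, hinter x₁ x₂ y hx₁ hx₂ hy]
    constructor
    · rw [← hSe]; exact Finset.inter_subset_right
    · rw [heq]; exact Finset.card_pair hne12
  have hgreen : ∀ e ∈ E, ∀ u ∈ e, ∀ v ∈ e, u ≠ v → c s(u, v) = 2 := by
    intro e he u hu v hv huv
    obtain ⟨S, hS, hSe⟩ := Finset.mem_image.mp he
    obtain ⟨rS, x₁, hx₁, x₂, hx₂, y, hy, hne12, hSeq, hc2⟩ := hmemT S hS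
    have heq : e = ({x₁, x₂} : Finset (Fin n)) := by
      rw [← hSe, hSeq, hinter x₁ x₂ y hx₁ hx₂ hy]
    have hsub : ({u, v} : Finset (Fin n)) ⊆ e := by
      intro z hz
      simp only [Finset.mem_insert, Finset.mem_singleton] at hz
      rcases hz with rfl | rfl
      · exact hu
      · exact hv
    have hpair : ({u, v} : Finset (Fin n)) = {x₁, x₂} := by
      rw [← heq]
      apply Finset.eq_of_subset_of_card_le hsub
      rw [(hE2 e he).2, Finset.card_pair huv]
    exact pair_color c x₁ x₂ u v hpair hc2
  have hapcolor : ∀ e ∈ E, ∀ u ∈ e, ∀ v ∈ e, u ≠ v →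
      c s(u, ap e) ≠ c s(v, ap e) := by
    intro e he u hu v hv huv
    obtain ⟨hapY, hapT⟩ := hap e he
    have rS := (hmemT _ hapT).1
    have heX := (hE2 e he).1
    have huX : u ∈ X := heX hu
    have hvX : v ∈ X := heX hv
    have hune : u ≠ ap e := fun h => hXY u huX (h ▸ hapY)
    have hvne : v ≠ ap e := fun h => hXY v hvX (h ▸ hapY)
    apply rS.2 u (Finset.mem_insert_of_mem hu) (ap e) (Finset.mem_insert_self _ _)
      v (Finset.mem_insert_of_mem hv) (ap e) (Finset.mem_insert_self _ _) hune hvne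
    intro hEq
    rw [Sym2.eq_iff] at hEq
    rcases hEq with ⟨h1, -⟩ | ⟨h1, -⟩
    · exact huv h1
    · exact hune h1
  set side : Fin n → Fin n → Bool := fun y x => decide (c s(x, y) = 1) with hsidedef
  -- key hypotheses
  have kh2 : ∀ e ∈ E, ∃ u ∈ e, ∃ v ∈ e, side (ap e) u ≠ side (ap e) v := by
    intro e he
    obtain ⟨u, v, huv, heq⟩ := Finset.card_eq_two.mp (hE2 e he).2
    have hu : u ∈ e := by rw [heq]; simp
    have hv : v ∈ e := by rw [heq]; simp
    refine ⟨u, hu, v, hv, ?_⟩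
    obtain ⟨hapY, -⟩ := hap e he
    have huX : u ∈ X := (hE2 e he).1 hu
    have hvX : v ∈ X := (hE2 e he).1 hv
    exact fin3_ne (hapcolor e he u hu v hv huv)
      (hnogreen u huX (ap e) hapY) (hnogreen v hvX (ap e) hapY)
  have kh4 : ∀ e ∈ E, ∀ e' ∈ E, e ≠ e' → ap e = ap e' →
      ∀ w ∈ e, w ∈ e' → False := by
    intro e he e' he' hee hapeq w hw hw'
    obtain ⟨hapY, hapT⟩ := hap e he
    obtain ⟨hapY', hapT'⟩ := hap e' he'
    have rS := (hmemT _ hapT).1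
    have rS' := (hmemT _ hapT').1
    have hSne : insert (ap e) e ≠ insert (ap e') e' := by
      intro hEq
      apply hee
      rw [← hinsert e (ap e) (hE2 e he).1 hapY, ← hinsert e' (ap e') (hE2 e' he').1 hapY',
        hEq]
    have hwX : w ∈ X := (hE2 e he).1 hw
    have hwne : w ≠ ap e := fun h => hXY w hwX (h ▸ hapY)
    exact hc _ _ rS rS' hSne w (ap e) hwne
      (Finset.mem_insert_of_mem hw) (Finset.mem_insert_self _ _)
      (Finset.mem_insert_of_mem hw') (by rw [hapeq]; exact Finset.mem_insert_self _ _)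
  have kh3 : ∀ e ∈ E, ∀ e' ∈ E, e ≠ e' → ap e ≠ ap e' →
      ∀ u ∈ e', ∀ v ∈ e', side (ap e) u = side (ap e) v := by
    intro e he e' he' hee hapne u hu v hv
    by_contra hside
    have hcuv : c s(u, ap e) ≠ c s(v, ap e) := by
      intro h
      exact hside (by rw [hsidedef]; simp only; rw [h])
    have huv : u ≠ v := by
      intro h
      exact hcuv (by rw [h])
    obtain ⟨hapY, hapT⟩ := hap e he
    obtain ⟨hapY', hapT'⟩ := hap e' he'
    have heX' := (hE2 e' he').1
    have huX : u ∈ X := heX' hu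
    have hvX : v ∈ X := heX' hv
    have hgr : c s(u, v) = 2 := hgreen e' he' u hu v hv huv
    have hcu2 : c s(u, ap e) ≠ 2 := hnogreen u huX (ap e) hapY
    have hcv2 : c s(v, ap e) ≠ 2 := hnogreen v hvX (ap e) hapY
    have hune : u ≠ ap e := fun h => hXY u huX (h ▸ hapY)
    have hvne : v ≠ ap e := fun h => hXY v hvX (h ▸ hapY)
    have rT1 : IsRainbowTri c {u, v, ap e} :=
      mk_rainbow c u v (ap e) huv hune hvne
        (by rw [hgr]; exact fun h => hcu2 h.symm)
        (by rw [hgr]; exact fun h => hcv2 h.symm)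
        hcuv
    have rT2 := (hmemT _ hapT').1
    have hT12 : ({u, v, ap e} : Finset (Fin n)) ≠ insert (ap e') e' := by
      intro hEq
      have : ap e ∈ insert (ap e') e' := by
        rw [← hEq]; simp
      rcases Finset.mem_insert.mp this with h | h
      · exact hapne h
      · exact hXY (ap e) ((hE2 e' he').1 h) hapY
    exact hc _ _ rT1 rT2 hT12 u v huv (by simp) (by simp)
      (Finset.mem_insert_of_mem hu) (Finset.mem_insert_of_mem hv)
  have hkey := key_s10 side X.card X le_rfl E ap hE2 kh2 kh3 kh4
  rw [← hcardTE]
  exact_mod_cast hkey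
end

section
/- Let d ≥ 0 be an integer, let V(K_n) = X ∪ Y be a partition with |X| ≥ 2, and let c : E(K_n) → {R, G, B} be an almost 3-Gallai colouring with three colours such that every vertex y ∈ Y has at most d green neighbours in X. Then the number of rainbow triangles y·x₁·x₂ with y ∈ Y, x₁, x₂ ∈ X and the edge x₁x₂ coloured green is at most (e/2)·(d+1)·|X|·log₂|X|. -/
section helpers
variable {n : ℕ} {c : Sym2 (Fin n) → Fin 3}

lemma tri_card {a b y : Fin n} (hab : a ≠ b) (hay : a ≠ y) (hby : b ≠ y) :
    ({a, b, y} : Finset (Fin n)).card = 3 := by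
  rw [Finset.card_insert_of_notMem (by simp [hab, hay]),
    Finset.card_insert_of_notMem (by simp [hby])]
  simp

lemma edge_cases {a b y u v : Fin n} (hu : u ∈ ({a, b, y} : Finset (Fin n)))
    (hv : v ∈ ({a, b, y} : Finset (Fin n))) (huv : u ≠ v) :
    s(u, v) = s(a, b) ∨ s(u, v) = s(a, y) ∨ s(u, v) = s(b, y) := by
  simp only [Finset.mem_insert, Finset.mem_singleton] at hu hv
  rcases hu with rfl | rfl | rfl <;> rcases hv with rfl | rfl | rfl <;>
    simp_all [Sym2.eq_iff] <;> tauto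

lemma rainbow_iff {a b y : Fin n} (hab : a ≠ b) (hay : a ≠ y) (hby : b ≠ y) :
    IsRainbowTri c {a, b, y} ↔
      (c s(a, b) ≠ c s(a, y) ∧ c s(a, b) ≠ c s(b, y) ∧ c s(a, y) ≠ c s(b, y)) := by
  constructor
  · intro ⟨_, h⟩
    have ha : a ∈ ({a, b, y} : Finset (Fin n)) := by simp
    have hb : b ∈ ({a, b, y} : Finset (Fin n)) := by simp
    have hy : y ∈ ({a, b, y} : Finset (Fin n)) := by simp
    refine ⟨h a ha b hb a ha y hy hab hay ?_, h a ha b hb b hb y hy hab hby ?_,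
      h a ha y hy b hb y hy hay hby ?_⟩ <;> simp [Sym2.eq_iff] <;> tauto
  · intro ⟨h1, h2, h3⟩
    refine ⟨tri_card hab hay hby, ?_⟩
    intro a' ha' b' hb' x' hx' y' hy' hne1 hne2 hne3
    rcases edge_cases ha' hb' hne1 with h | h | h <;>
      rcases edge_cases hx' hy' hne2 with h' | h' | h' <;>
        rw [h, h'] at hne3 ⊢ <;>
          first
            | exact absurd rfl hne3
            | exact h1 | exact h1.symm | exact h2 | exact h2.symm
            | exact h3 | exact h3.symm

end helpers

open Finset

section main
variable {n : ℕ} (c : Sym2 (Fin n) → Fin 3) (X Y : Finset (Fin n))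

def Nrel (a b : Fin n) : Prop :=
  a ∈ X ∧ b ∈ X ∧ a ≠ b ∧ c s(a, b) = 2 ∧ ∃ y ∈ Y, IsRainbowTri c {a, b, y}

variable {c X Y}

lemma Nrel_symm {a b : Fin n} (h : Nrel c X Y a b) : Nrel c X Y b a := by
  obtain ⟨ha, hb, hab, hcol, y, hy, hrb⟩ := h
  refine ⟨hb, ha, hab.symm, by rwa [Sym2.eq_swap], y, hy, ?_⟩
  have : ({b, a, y} : Finset (Fin n)) = {a, b, y} := by
    ext z; simp; tauto
  rwa [this]

variable (hdisj : Disjoint X Y)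

lemma ne_of_XY (hdisj : Disjoint X Y) {x y : Fin n} (hx : x ∈ X) (hy : y ∈ Y) : x ≠ y := by
  rintro rfl; exact Finset.disjoint_left.mp hdisj hx hy

/-- two rainbow triangles on the same pair `a,b` with apexes in `Y` coincide -/
lemma witness_unique (hc : AlmostGallai3 c) (hdisj : Disjoint X Y)
    {a b y y' : Fin n} (ha : a ∈ X) (hb : b ∈ X) (hy : y ∈ Y) (hy' : y' ∈ Y)
    (hab : a ≠ b) (h1 : IsRainbowTri c {a, b, y}) (h2 : IsRainbowTri c {a, b, y'}) :
    y = y' := by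
  by_contra hne
  have hSne : ({a, b, y} : Finset (Fin n)) ≠ {a, b, y'} := by
    intro hEq
    have : y ∈ ({a, b, y'} : Finset (Fin n)) := by rw [← hEq]; simp
    simp only [Finset.mem_insert, Finset.mem_singleton] at this
    rcases this with rfl | rfl | rfl
    · exact ne_of_XY hdisj ha hy rfl
    · exact ne_of_XY hdisj hb hy rfl
    · exact hne rfl
  exact hc _ _ h1 h2 hSne a b hab (by simp) (by simp) (by simp) (by simp)

/-- matching: same apex y, same base vertex x', two rainbow triangles -/
lemma matching_at (hc : AlmostGallai3 c) (hdisj : Disjoint X Y)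
    {x' z z' y : Fin n} (hx' : x' ∈ X) (hz : z ∈ X) (hz' : z' ∈ X) (hy : y ∈ Y)
    (hxz : x' ≠ z) (hxz' : x' ≠ z')
    (h1 : IsRainbowTri c {x', z, y}) (h2 : IsRainbowTri c {x', z', y}) : z = z' := by
  by_contra hne
  have hSne : ({x', z, y} : Finset (Fin n)) ≠ {x', z', y} := by
    intro hEq
    have : z ∈ ({x', z', y} : Finset (Fin n)) := by rw [← hEq]; simp
    simp only [Finset.mem_insert, Finset.mem_singleton] at this
    rcases this with rfl | rfl | rfl
    · exact hxz rfl
    · exact hne rfl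
    · exact ne_of_XY hdisj hz hy rfl
  exact hc _ _ h1 h2 hSne x' y (ne_of_XY hdisj hx' hy) (by simp) (by simp) (by simp) (by simp)

end main

section counting
variable {n : ℕ} (c : Sym2 (Fin n) → Fin 3) (X Y : Finset (Fin n))

open Classical in
noncomputable def degN (A : Finset (Fin n)) (x : Fin n) : ℕ :=
  (A.filter (fun b => Nrel c X Y x b)).card

open Classical in
noncomputable def E2 (A : Finset (Fin n)) : Finset (Finset (Fin n)) :=
  Finset.univ.filter (fun S => ∃ a ∈ A, ∃ b ∈ A, Nrel c X Y a b ∧ S = {a, b})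

variable {c X Y}
variable (hc : AlmostGallai3 c) (hdisj : Disjoint X Y)
variable (hdeg : ∀ y ∈ Y, ({x ∈ X | c s(x, y) = 2} : Finset (Fin n)).card ≤ d)

open Classical in
lemma size_lb (d : ℕ) (hc : AlmostGallai3 c) (hdisj : Disjoint X Y)
    (hdeg : ∀ y ∈ Y, ({x ∈ X | c s(x, y) = 2} : Finset (Fin n)).card ≤ d) :
    ∀ k r : ℕ, r ≤ d → ∀ A : Finset (Fin n), A ⊆ X → A.Nonempty →
      (∀ x ∈ A, (d + 1) * k + r ≤ degN c X Y A x) → 2 ^ k * (r + 1) ≤ A.card := by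
  intro k
  induction k with
  | zero =>
    intro r hr A hAX ⟨x, hx⟩ hdegs
    have h1 : degN c X Y A x + 1 ≤ A.card := by
      have hsub : insert x (A.filter (fun b => Nrel c X Y x b)) ⊆ A := by
        intro z hz
        rcases Finset.mem_insert.mp hz with rfl | hz
        · exact hx
        · exact (Finset.mem_filter.mp hz).1
      have hxnot : x ∉ A.filter (fun b => Nrel c X Y x b) := by
        simp only [Finset.mem_filter]
        rintro ⟨-, -, -, hne, -⟩; exact hne rfl
      calc degN c X Y A x + 1 = (insert x (A.filter (fun b => Nrel c X Y x b))).card := by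
            rw [Finset.card_insert_of_notMem hxnot]; rfl
        _ ≤ A.card := Finset.card_le_card hsub
    have := hdegs x hx
    simp only [Nat.mul_zero, Nat.zero_add] at this
    simpa using (by omega : r + 1 ≤ A.card)
  | succ k ih =>
    intro r hr A hAX hAne hdegs
    -- find an edge
    obtain ⟨x₀, hx₀⟩ := hAne
    have hdx₀ : 1 ≤ degN c X Y A x₀ := by
      have h1 : 0 < (d + 1) * (k + 1) := Nat.mul_pos (by omega) (by omega)
      have := hdegs x₀ hx₀; omega
    obtain ⟨b₀, hb₀mem⟩ := Finset.card_pos.mp (lt_of_lt_of_le Nat.zero_lt_one hdx₀)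
    obtain ⟨hb₀A, hN₀⟩ := Finset.mem_filter.mp hb₀mem
    obtain ⟨hx₀X, hb₀X, hne₀, hcol₀, y, hyY, hrb₀⟩ := hN₀
    have hx₀y : x₀ ≠ y := ne_of_XY hdisj hx₀X hyY
    have hb₀y : b₀ ≠ y := ne_of_XY hdisj hb₀X hyY
    obtain ⟨hd1, hd2, hd3⟩ := (rainbow_iff hne₀ hx₀y hb₀y).mp hrb₀
    set α := c s(x₀, y) with hα
    set β := c s(b₀, y) with hβ
    have hα2 : α ≠ 2 := fun h => hd1 (hcol₀.trans h.symm)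
    have hβ2 : β ≠ 2 := fun h => hd2 (hcol₀.trans h.symm)
    have hαβ : α ≠ β := hd3
    set A₀ := A.filter (fun z => c s(z, y) = α) with hA₀
    set A₁ := A.filter (fun z => c s(z, y) = β) with hA₁
    set A₂ := A.filter (fun z => c s(z, y) = 2) with hA₂
    have htricho : ∀ v a b : Fin 3, a ≠ b → a ≠ 2 → b ≠ 2 → v = a ∨ v = b ∨ v = 2 := by decide
    -- every N-edge from A₀ to A₁ gives a rainbow triangle with apex y
    have hcross : ∀ x' ∈ A₀, ∀ z ∈ A₁, Nrel c X Y x' z → IsRainbowTri c {x', z, y} := by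
      intro x' hx' z hz hN
      obtain ⟨hx'X, hzX, hx'z, hcol, -⟩ := hN
      have h0 : c s(x', y) = α := (Finset.mem_filter.mp hx').2
      have h1 : c s(z, y) = β := (Finset.mem_filter.mp hz).2
      exact (rainbow_iff hx'z (ne_of_XY hdisj hx'X hyY) (ne_of_XY hdisj hzX hyY)).mpr
        ⟨by rw [hcol, h0]; exact fun h => hα2 h.symm,
         by rw [hcol, h1]; exact fun h => hβ2 h.symm,
         by rw [h0, h1]; exact hαβ⟩
    -- at most one neighbour in A₁ for each x' ∈ A₀
    have hmatch : ∀ x' ∈ A₀, (A₁.filter (fun z => Nrel c X Y x' z)).card ≤ 1 := by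
      intro x' hx'
      apply Finset.card_le_one.mpr
      intro z hzm z' hz'm
      obtain ⟨hz, hNz⟩ := Finset.mem_filter.mp hzm
      obtain ⟨hz', hNz'⟩ := Finset.mem_filter.mp hz'm
      exact matching_at hc hdisj hNz.1 hNz.2.1 hNz'.2.1 hyY hNz.2.2.1 hNz'.2.2.1
        (hcross x' hx' z hz hNz) (hcross x' hx' z' hz' hNz')
    have hA₂d : A₂.card ≤ d := by
      refine le_trans (Finset.card_le_card ?_) (hdeg y hyY)
      intro z hz
      obtain ⟨hzA, hzc⟩ := Finset.mem_filter.mp hz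
      exact Finset.mem_filter.mpr ⟨hAX hzA, hzc⟩
    -- degree within A₀
    have hdeg₀ : ∀ x' ∈ A₀, (d + 1) * k + r ≤ degN c X Y A₀ x' := by
      intro x' hx'
      have hsplit : A.filter (fun b => Nrel c X Y x' b) ⊆
          (A₀.filter (fun b => Nrel c X Y x' b)) ∪
            (A₁.filter (fun z => Nrel c X Y x' z)) ∪ A₂ := by
        intro w hw
        obtain ⟨hwA, hwN⟩ := Finset.mem_filter.mp hw
        rcases htricho (c s(w, y)) α β hαβ hα2 hβ2 with h | h | h
        · exact Finset.mem_union.mpr (Or.inl (Finset.mem_union.mpr (Or.inl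
            (Finset.mem_filter.mpr ⟨Finset.mem_filter.mpr ⟨hwA, h⟩, hwN⟩))))
        · exact Finset.mem_union.mpr (Or.inl (Finset.mem_union.mpr (Or.inr
            (Finset.mem_filter.mpr ⟨Finset.mem_filter.mpr ⟨hwA, h⟩, hwN⟩))))
        · exact Finset.mem_union.mpr (Or.inr (Finset.mem_filter.mpr ⟨hwA, h⟩))
      have hcard : degN c X Y A x' ≤ degN c X Y A₀ x' + 1 + d := by
        calc degN c X Y A x' ≤ ((A₀.filter (fun b => Nrel c X Y x' b)) ∪
              (A₁.filter (fun z => Nrel c X Y x' z)) ∪ A₂).card := Finset.card_le_card hsplit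
          _ ≤ ((A₀.filter (fun b => Nrel c X Y x' b)) ∪
              (A₁.filter (fun z => Nrel c X Y x' z))).card + A₂.card := Finset.card_union_le _ _
          _ ≤ (A₀.filter (fun b => Nrel c X Y x' b)).card +
              (A₁.filter (fun z => Nrel c X Y x' z)).card + A₂.card := by
                have := Finset.card_union_le (A₀.filter (fun b => Nrel c X Y x' b))
                  (A₁.filter (fun z => Nrel c X Y x' z))
                omega
          _ ≤ degN c X Y A₀ x' + 1 + d := by
                have h1 := hmatch x' hx'
                have : (A₀.filter (fun b => Nrel c X Y x' b)).card = degN c X Y A₀ x' := rfl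
                omega
      have hA' := hdegs x' (Finset.mem_filter.mp hx').1
      have : (d + 1) * (k + 1) + r = ((d + 1) * k + r) + (d + 1) := by ring
      omega
    have hdeg₁ : ∀ x' ∈ A₁, (d + 1) * k + r ≤ degN c X Y A₁ x' := by
      intro x' hx'
      have hsplit : A.filter (fun b => Nrel c X Y x' b) ⊆
          (A₁.filter (fun b => Nrel c X Y x' b)) ∪
            (A₀.filter (fun z => Nrel c X Y x' z)) ∪ A₂ := by
        intro w hw
        obtain ⟨hwA, hwN⟩ := Finset.mem_filter.mp hw
        rcases htricho (c s(w, y)) α β hαβ hα2 hβ2 with h | h | h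
        · exact Finset.mem_union.mpr (Or.inl (Finset.mem_union.mpr (Or.inr
            (Finset.mem_filter.mpr ⟨Finset.mem_filter.mpr ⟨hwA, h⟩, hwN⟩))))
        · exact Finset.mem_union.mpr (Or.inl (Finset.mem_union.mpr (Or.inl
            (Finset.mem_filter.mpr ⟨Finset.mem_filter.mpr ⟨hwA, h⟩, hwN⟩))))
        · exact Finset.mem_union.mpr (Or.inr (Finset.mem_filter.mpr ⟨hwA, h⟩))
      have hmatch' : (A₀.filter (fun z => Nrel c X Y x' z)).card ≤ 1 := by
        apply Finset.card_le_one.mpr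
        intro z hzm z' hz'm
        obtain ⟨hz, hNz⟩ := Finset.mem_filter.mp hzm
        obtain ⟨hz', hNz'⟩ := Finset.mem_filter.mp hz'm
        have hrb1 := hcross z hz x' hx' (Nrel_symm hNz)
        have hrb2 := hcross z' hz' x' hx' (Nrel_symm hNz')
        -- rainbow triangles {z, x', y} and {z', x', y}; rewrite to put x' first
        have e1 : ({z, x', y} : Finset (Fin n)) = {x', z, y} := by ext w; simp; tauto
        have e2 : ({z', x', y} : Finset (Fin n)) = {x', z', y} := by ext w; simp; tauto
        rw [e1] at hrb1; rw [e2] at hrb2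
        exact matching_at hc hdisj hNz.1 hNz.2.1 hNz'.2.1 hyY hNz.2.2.1 hNz'.2.2.1 hrb1 hrb2
      have hcard : degN c X Y A x' ≤ degN c X Y A₁ x' + 1 + d := by
        calc degN c X Y A x' ≤ ((A₁.filter (fun b => Nrel c X Y x' b)) ∪
              (A₀.filter (fun z => Nrel c X Y x' z)) ∪ A₂).card := Finset.card_le_card hsplit
          _ ≤ ((A₁.filter (fun b => Nrel c X Y x' b)) ∪
              (A₀.filter (fun z => Nrel c X Y x' z))).card + A₂.card := Finset.card_union_le _ _
          _ ≤ (A₁.filter (fun b => Nrel c X Y x' b)).card +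
              (A₀.filter (fun z => Nrel c X Y x' z)).card + A₂.card := by
                have := Finset.card_union_le (A₁.filter (fun b => Nrel c X Y x' b))
                  (A₀.filter (fun z => Nrel c X Y x' z))
                omega
          _ ≤ degN c X Y A₁ x' + 1 + d := by
                have : (A₁.filter (fun b => Nrel c X Y x' b)).card = degN c X Y A₁ x' := rfl
                omega
      have hA' := hdegs x' (Finset.mem_filter.mp hx').1
      have : (d + 1) * (k + 1) + r = ((d + 1) * k + r) + (d + 1) := by ring
      omega
    -- apply induction hypothesis to A₀ and A₁
    have hA₀ne : A₀.Nonempty := ⟨x₀, Finset.mem_filter.mpr ⟨hx₀, rfl⟩⟩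
    have hA₁ne : A₁.Nonempty := ⟨b₀, Finset.mem_filter.mpr ⟨hb₀A, rfl⟩⟩
    have ih₀ := ih r hr A₀ (le_trans (Finset.filter_subset _ _) hAX) hA₀ne hdeg₀
    have ih₁ := ih r hr A₁ (le_trans (Finset.filter_subset _ _) hAX) hA₁ne hdeg₁
    have hdisj01 : Disjoint A₀ A₁ := by
      rw [Finset.disjoint_left]
      intro z hz0 hz1
      exact hαβ ((Finset.mem_filter.mp hz0).2.symm.trans (Finset.mem_filter.mp hz1).2)
    have hunion : (A₀ ∪ A₁).card = A₀.card + A₁.card := Finset.card_union_of_disjoint hdisj01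
    have hsubA : A₀ ∪ A₁ ⊆ A := Finset.union_subset (Finset.filter_subset _ _)
      (Finset.filter_subset _ _)
    have := Finset.card_le_card hsubA
    have hgoal : 2 ^ (k + 1) * (r + 1) = 2 ^ k * (r + 1) + 2 ^ k * (r + 1) := by ring
    omega

open Real in
lemma exists_small_deg (d : ℕ) (hc : AlmostGallai3 c) (hdisj : Disjoint X Y)
    (hdeg : ∀ y ∈ Y, ({x ∈ X | c s(x, y) = 2} : Finset (Fin n)).card ≤ d)
    (A : Finset (Fin n)) (hAX : A ⊆ X) (hAne : A.Nonempty) :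
    ∃ x ∈ A, (degN c X Y A x : ℝ) ≤ ((d : ℝ) + 1) * Real.logb 2 (A.card : ℝ) := by
  by_contra hcon
  push_neg at hcon
  set s := A.card with hs
  have hs1 : 1 ≤ s := Finset.card_pos.mpr hAne
  have hlogpos : 0 ≤ Real.logb 2 (s : ℝ) := by
    apply Real.logb_nonneg one_lt_two
    exact_mod_cast hs1
  set v : ℝ := ((d : ℝ) + 1) * Real.logb 2 (s : ℝ) with hv
  have hv0 : 0 ≤ v := by positivity
  set D : ℕ := ⌊v⌋₊ with hD
  have hdegall : ∀ x ∈ A, (d + 1) * ((D + 1) / (d + 1)) + (D + 1) % (d + 1) ≤ degN c X Y A x := by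
    intro x hx
    have h1 : v < (degN c X Y A x : ℝ) := hcon x hx
    have h2 : D < degN c X Y A x := by
      have := Nat.floor_le hv0
      have : (D : ℝ) < (degN c X Y A x : ℝ) := lt_of_le_of_lt (by rw [hD]; exact Nat.floor_le hv0) h1
      exact_mod_cast this
    rw [Nat.div_add_mod]
    omega
  have hk := size_lb d hc hdisj hdeg ((D + 1) / (d + 1)) ((D + 1) % (d + 1))
    (by have := Nat.mod_lt (D + 1) (show 0 < d + 1 by omega); omega) A hAX hAne hdegall
  set k := (D + 1) / (d + 1) with hkd
  set r := (D + 1) % (d + 1) with hrd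
  -- now  s ≥ 2^k (r+1)  gives  v ≥ D+1 > v
  have hrle : r ≤ d := by have := Nat.mod_lt (D + 1) (show 0 < d + 1 by omega); omega
  have hlog1 : (k : ℝ) + Real.logb 2 ((r : ℝ) + 1) ≤ Real.logb 2 (s : ℝ) := by
    have hpos : (0 : ℝ) < 2 ^ k * ((r : ℝ) + 1) := by positivity
    have hle : (2 : ℝ) ^ k * ((r : ℝ) + 1) ≤ (s : ℝ) := by exact_mod_cast hk
    have := Real.logb_le_logb_of_le one_lt_two hpos hle
    rwa [Real.logb_mul (by positivity) (by positivity), Real.logb_pow,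
      Real.logb_self_eq_one one_lt_two, mul_one] at this
  have hrlog : (r : ℝ) ≤ ((d : ℝ) + 1) * Real.logb 2 ((r : ℝ) + 1) := by
    rcases Nat.eq_zero_or_pos r with hr0 | hrpos
    · rw [hr0]; simp
    · have h2r : (2 : ℝ) ≤ (r : ℝ) + 1 := by
        have : (1 : ℝ) ≤ (r : ℝ) := by exact_mod_cast hrpos
        linarith
      have hlb : (1 : ℝ) ≤ Real.logb 2 ((r : ℝ) + 1) := by
        have := Real.logb_le_logb_of_le one_lt_two (show (0:ℝ) < 2 by norm_num) h2r
        rwa [Real.logb_self_eq_one one_lt_two] at this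
      have hrd' : (r : ℝ) ≤ (d : ℝ) + 1 := by
        have : (r : ℝ) ≤ (d : ℝ) := by exact_mod_cast hrle
        linarith
      nlinarith
  have hfinal : (D : ℝ) + 1 ≤ v := by
    have h1 : ((d : ℝ) + 1) * ((k : ℝ) + Real.logb 2 ((r : ℝ) + 1)) ≤ v := by
      rw [hv]
      apply mul_le_mul_of_nonneg_left hlog1 (by positivity)
    have h2 : ((d : ℝ) + 1) * (k : ℝ) + (r : ℝ) ≤
        ((d : ℝ) + 1) * ((k : ℝ) + Real.logb 2 ((r : ℝ) + 1)) := by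
      have := mul_le_mul_of_nonneg_left hrlog (show (0:ℝ) ≤ 1 by norm_num)
      nlinarith [hrlog]
    have h3 : ((D : ℕ) : ℝ) + 1 = ((d : ℝ) + 1) * (k : ℝ) + (r : ℝ) := by
      have : (d + 1) * k + r = D + 1 := by rw [hkd, hrd]; exact Nat.div_add_mod (D+1) (d+1)
      exact_mod_cast congrArg (Nat.cast : ℕ → ℝ) this.symm
    linarith
  have : v < (D : ℝ) + 1 := Nat.lt_floor_add_one v
  linarith

open Classical in
lemma E2_peel (A : Finset (Fin n)) (x : Fin n) :
    (E2 c X Y A).card ≤ (E2 c X Y (A.erase x)).card + degN c X Y A x := by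
  classical
  have hsub : E2 c X Y A ⊆ E2 c X Y (A.erase x) ∪
      ((A.filter (fun b => Nrel c X Y x b)).image (fun b => ({x, b} : Finset (Fin n)))) := by
    intro S hS
    obtain ⟨-, a, ha, b, hb, hN, rfl⟩ := Finset.mem_filter.mp hS
    by_cases hax : a = x
    · subst hax
      refine Finset.mem_union.mpr (Or.inr (Finset.mem_image.mpr ⟨b, ?_, rfl⟩))
      exact Finset.mem_filter.mpr ⟨hb, hN⟩
    · by_cases hbx : b = x
      · subst hbx
        refine Finset.mem_union.mpr (Or.inr (Finset.mem_image.mpr ⟨a, ?_, ?_⟩))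
        · exact Finset.mem_filter.mpr ⟨ha, Nrel_symm hN⟩
        · exact (Finset.pair_comm b a)
      · refine Finset.mem_union.mpr (Or.inl ?_)
        refine Finset.mem_filter.mpr ⟨Finset.mem_univ _, a, ?_, b, ?_, hN, rfl⟩
        · exact Finset.mem_erase.mpr ⟨hax, ha⟩
        · exact Finset.mem_erase.mpr ⟨hbx, hb⟩
  calc (E2 c X Y A).card ≤ _ := Finset.card_le_card hsub
    _ ≤ (E2 c X Y (A.erase x)).card +
        ((A.filter (fun b => Nrel c X Y x b)).image (fun b => ({x, b} : Finset (Fin n)))).card :=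
          Finset.card_union_le _ _
    _ ≤ (E2 c X Y (A.erase x)).card + degN c X Y A x := by
        have := Finset.card_image_le (s := A.filter (fun b => Nrel c X Y x b))
          (f := fun b => ({x, b} : Finset (Fin n)))
        exact Nat.add_le_add_left this _

lemma E2_bound (d : ℕ) (hc : AlmostGallai3 c) (hdisj : Disjoint X Y)
    (hdeg : ∀ y ∈ Y, ({x ∈ X | c s(x, y) = 2} : Finset (Fin n)).card ≤ d) :
    ∀ s : ℕ, ∀ A : Finset (Fin n), A ⊆ X → A.card ≤ s →
      ((E2 c X Y A).card : ℝ) ≤ ((d : ℝ) + 1) * (A.card : ℝ) * Real.logb 2 (A.card : ℝ) := by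
  classical
  intro s
  induction s with
  | zero =>
    intro A hAX hcard
    have hA : A = ∅ := Finset.card_eq_zero.mp (Nat.le_zero.mp hcard)
    subst hA
    have : E2 c X Y ∅ = ∅ := by
      apply Finset.eq_empty_of_forall_notMem
      intro S hS
      obtain ⟨-, a, ha, -⟩ := Finset.mem_filter.mp hS
      exact Finset.notMem_empty a ha
    rw [this]
    simp
  | succ s ih =>
    intro A hAX hcard
    rcases Nat.lt_or_ge A.card (s + 1) with hlt | hge
    · exact ih A hAX (by omega)
    have hAcard : A.card = s + 1 := by omega
    rcases Nat.eq_zero_or_pos s with hs0 | hspos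
    · -- A has exactly 1 element: no edges
      subst hs0
      have hE : E2 c X Y A = ∅ := by
        ext S
        simp only [E2, Finset.mem_filter, Finset.mem_univ, true_and, Finset.notMem_empty,
          iff_false]
        rintro ⟨a, ha, b, hb, hN, rfl⟩
        exact hN.2.2.1 (Finset.card_le_one.mp (by omega) a ha b hb)
      rw [hE, hAcard]
      simp
    · -- A.card = s+1 ≥ 2
      have hAne : A.Nonempty := Finset.card_pos.mp (by omega)
      obtain ⟨x, hx, hdx⟩ := exists_small_deg d hc hdisj hdeg A hAX hAne
      set A' := A.erase x with hA'
      have hA'card : A'.card = s := by rw [hA', Finset.card_erase_of_mem hx, hAcard]; omega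
      have hstep := E2_peel (c := c) (X := X) (Y := Y) A x
      have hih := ih A' (le_trans (Finset.erase_subset _ _) hAX) (le_of_eq hA'card)
      have hlogmono : Real.logb 2 ((s : ℝ)) ≤ Real.logb 2 ((s : ℝ) + 1) := by
        apply Real.logb_le_logb_of_le one_lt_two
        · exact_mod_cast hspos
        · linarith
      have hcast : ((A.card : ℕ) : ℝ) = (s : ℝ) + 1 := by rw [hAcard]; push_cast; ring
      have hcast' : ((A'.card : ℕ) : ℝ) = (s : ℝ) := by rw [hA'card]
      have hlog0 : 0 ≤ Real.logb 2 ((s : ℝ) + 1) := by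
        apply Real.logb_nonneg one_lt_two
        have : (1 : ℝ) ≤ (s : ℝ) := by exact_mod_cast hspos
        linarith
      have hd0 : (0 : ℝ) ≤ (d : ℝ) + 1 := by positivity
      have hs0' : (0 : ℝ) ≤ (s : ℝ) := by positivity
      calc ((E2 c X Y A).card : ℝ)
          ≤ ((E2 c X Y A').card : ℝ) + (degN c X Y A x : ℝ) := by exact_mod_cast hstep
        _ ≤ ((d : ℝ) + 1) * (s : ℝ) * Real.logb 2 (s : ℝ) +
            ((d : ℝ) + 1) * Real.logb 2 ((s : ℝ) + 1) := by
              rw [hcast'] at hih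
              have := hdx
              rw [hcast] at this
              linarith
        _ ≤ ((d : ℝ) + 1) * (s : ℝ) * Real.logb 2 ((s : ℝ) + 1) +
            ((d : ℝ) + 1) * Real.logb 2 ((s : ℝ) + 1) := by
              have h := mul_le_mul_of_nonneg_left hlogmono
                (show (0:ℝ) ≤ ((d : ℝ) + 1) * (s : ℝ) by positivity)
              calc ((d : ℝ) + 1) * (s : ℝ) * Real.logb 2 (s : ℝ) +
                    ((d : ℝ) + 1) * Real.logb 2 ((s : ℝ) + 1)
                  ≤ ((d : ℝ) + 1) * (s : ℝ) * Real.logb 2 ((s : ℝ) + 1) +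
                    ((d : ℝ) + 1) * Real.logb 2 ((s : ℝ) + 1) := by
                      rw [mul_assoc, mul_assoc]; linarith [h]
                _ = _ := rfl
        _ = ((d : ℝ) + 1) * ((s : ℝ) + 1) * Real.logb 2 ((s : ℝ) + 1) := by ring
        _ = ((d : ℝ) + 1) * (A.card : ℝ) * Real.logb 2 (A.card : ℝ) := by rw [hcast]

end counting

theorem lemma_dnlog (d n : ℕ) (c : Sym2 (Fin n) → Fin 3)
    (hc : AlmostGallai3 c) (X Y : Finset (Fin n)) (hdisj : Disjoint X Y)
    (hcover : X ∪ Y = Finset.univ) (hX : 2 ≤ X.card)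
    (hdeg : ∀ y ∈ Y, ({x ∈ X | c s(x, y) = 2} : Finset (Fin n)).card ≤ d) :
    (({S : Finset (Fin n) | IsRainbowTri c S ∧
        ∃ x₁ ∈ X, ∃ x₂ ∈ X, ∃ y ∈ Y, x₁ ≠ x₂ ∧ S = {x₁, x₂, y} ∧
          c s(x₁, x₂) = 2}).ncard : ℝ) ≤
      Real.exp 1 / 2 * ((d : ℝ) + 1) * (X.card : ℝ) * Real.logb 2 (X.card : ℝ) := by
  classical
  set P : Finset (Fin n) → Prop := fun S => IsRainbowTri c S ∧
    ∃ x₁ ∈ X, ∃ x₂ ∈ X, ∃ y ∈ Y, x₁ ≠ x₂ ∧ S = {x₁, x₂, y} ∧ c s(x₁, x₂) = 2 with hP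
  set Tfin : Finset (Finset (Fin n)) := Finset.univ.filter P with hT
  have hseteq : {S : Finset (Fin n) | IsRainbowTri c S ∧
      ∃ x₁ ∈ X, ∃ x₂ ∈ X, ∃ y ∈ Y, x₁ ≠ x₂ ∧ S = {x₁, x₂, y} ∧
        c s(x₁, x₂) = 2} = ↑Tfin := by
    ext S; simp [hT, hP]
  rw [hseteq, Set.ncard_coe_finset]
  -- structure of elements of Tfin
  have hstruct : ∀ S ∈ Tfin, ∀ x₁ x₂ y : Fin n, x₁ ∈ X → x₂ ∈ X → y ∈ Y → x₁ ≠ x₂ →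
      S = {x₁, x₂, y} → S ∩ X = {x₁, x₂} := by
    intro S hS x₁ x₂ y hx₁ hx₂ hy hne hSeq
    subst hSeq
    have hyX : y ∉ X := fun h => ne_of_XY hdisj h hy rfl
    ext z
    simp only [Finset.mem_inter, Finset.mem_insert, Finset.mem_singleton]
    constructor
    · rintro ⟨rfl | rfl | rfl, hzX⟩
      · exact Or.inl rfl
      · exact Or.inr rfl
      · exact absurd hzX hyX
    · rintro (rfl | rfl)
      · exact ⟨Or.inl rfl, hx₁⟩
      · exact ⟨Or.inr (Or.inl rfl), hx₂⟩
  have hmaps : ∀ S ∈ Tfin, S ∩ X ∈ E2 c X Y X := by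
    intro S hS
    obtain ⟨-, hrb, x₁, hx₁, x₂, hx₂, y, hy, hne, hSeq, hcol⟩ := Finset.mem_filter.mp hS
    refine Finset.mem_filter.mpr ⟨Finset.mem_univ _, x₁, hx₁, x₂, hx₂, ?_, ?_⟩
    · exact ⟨hx₁, hx₂, hne, hcol, y, hy, hSeq ▸ hrb⟩
    · exact hstruct S hS x₁ x₂ y hx₁ hx₂ hy hne hSeq
  have hinj : Set.InjOn (fun S => S ∩ X) ↑Tfin := by
    intro S hS S' hS' heq
    replace hS := Finset.mem_coe.mp hS
    replace hS' := Finset.mem_coe.mp hS'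
    obtain ⟨-, hrb, x₁, hx₁, x₂, hx₂, y, hy, hne, hSeq, hcol⟩ := Finset.mem_filter.mp hS
    obtain ⟨-, hrb', x₁', hx₁', x₂', hx₂', y', hy', hne', hSeq', hcol'⟩ :=
      Finset.mem_filter.mp hS'
    replace heq : S ∩ X = S' ∩ X := heq
    by_contra hSS
    have h1 : S ∩ X = {x₁, x₂} := hstruct S hS x₁ x₂ y hx₁ hx₂ hy hne hSeq
    have hx₁S : x₁ ∈ S := by rw [hSeq]; simp
    have hx₂S : x₂ ∈ S := by rw [hSeq]; simp
    have hx₁S' : x₁ ∈ S' := by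
      have : x₁ ∈ S' ∩ X := by
        rw [← heq]
        exact Finset.mem_inter.mpr ⟨hx₁S, hx₁⟩
      exact (Finset.mem_inter.mp this).1
    have hx₂S' : x₂ ∈ S' := by
      have : x₂ ∈ S' ∩ X := by
        rw [← heq]
        exact Finset.mem_inter.mpr ⟨hx₂S, hx₂⟩
      exact (Finset.mem_inter.mp this).1
    exact hc S S' hrb hrb' hSS x₁ x₂ hne hx₁S hx₂S hx₁S' hx₂S'
  have hcard : Tfin.card ≤ (E2 c X Y X).card :=
    Finset.card_le_card_of_injOn (fun S => S ∩ X) hmaps hinj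
  have hE2 : ((E2 c X Y X).card : ℝ) ≤
      ((d : ℝ) + 1) * (X.card : ℝ) * Real.logb 2 (X.card : ℝ) :=
    E2_bound d hc hdisj hdeg X.card X (subset_refl X) (le_refl _)
  have hlog0 : 0 ≤ Real.logb 2 (X.card : ℝ) := by
    apply Real.logb_nonneg one_lt_two
    have : (2 : ℝ) ≤ (X.card : ℝ) := by exact_mod_cast hX
    linarith
  have he : (1 : ℝ) ≤ Real.exp 1 / 2 := by
    have := Real.add_one_le_exp 1
    linarith
  have hbase : (0 : ℝ) ≤ ((d : ℝ) + 1) * (X.card : ℝ) * Real.logb 2 (X.card : ℝ) := by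
    positivity
  calc (Tfin.card : ℝ) ≤ ((E2 c X Y X).card : ℝ) := by exact_mod_cast hcard
    _ ≤ ((d : ℝ) + 1) * (X.card : ℝ) * Real.logb 2 (X.card : ℝ) := hE2
    _ = 1 * (((d : ℝ) + 1) * (X.card : ℝ) * Real.logb 2 (X.card : ℝ)) := by ring
    _ ≤ (Real.exp 1 / 2) * (((d : ℝ) + 1) * (X.card : ℝ) * Real.logb 2 (X.card : ℝ)) :=
        mul_le_mul_of_nonneg_right he hbase
    _ = Real.exp 1 / 2 * ((d : ℝ) + 1) * (X.card : ℝ) * Real.logb 2 (X.card : ℝ) := by ring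
end

section
/- For all n ≥ 3, γ(n) ≥ ⌊(n−1)/2⌋: there is a complete tripartite graph K(V₁,V₂,V₃) on n vertices with |V₁| = 1 and ||V₂| − |V₃|| ≤ 1, and a good red-blue colouring of it containing at least ⌊(n−1)/2⌋ red (hence monochromatic) triangles; namely, colour all edges between V₁ and V₂ ∪ V₃ red, colour the edges of a maximum matching between V₂ and V₃ red, and colour all remaining edges blue. -/
/-- `S` is a monochromatic triangle of the complete tripartite graph with parts given
by `part` (the graph whose edges are the pairs of vertices lying in distinct parts),
under the red-blue edge colouring `c` (red = `true`, blue = `false`): it consists of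
three vertices in pairwise distinct parts, with all three edges of the same colour. -/
def IsMonoTri {n : ℕ} (part : Fin n → Fin 3) (c : Sym2 (Fin n) → Bool)
    (S : Finset (Fin n)) : Prop :=
  S.card = 3 ∧ (∀ a ∈ S, ∀ b ∈ S, a ≠ b → part a ≠ part b) ∧
    ∃ col : Bool, ∀ a ∈ S, ∀ b ∈ S, a ≠ b → c s(a, b) = col

/-- A red-blue colouring of a complete tripartite graph is good if no two (distinct)
monochromatic triangles share an edge. -/
def GoodColouring {n : ℕ} (part : Fin n → Fin 3) (c : Sym2 (Fin n) → Bool) : Prop :=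
  ∀ S T : Finset (Fin n), IsMonoTri part c S → IsMonoTri part c T → S ≠ T →
    ∀ a b : Fin n, a ≠ b → a ∈ S → b ∈ S → a ∈ T → b ∈ T → False

def partFn (n : ℕ) : Fin n → Fin 3 :=
  fun v => if v.val = 0 then 0 else if v.val % 2 = 1 then 1 else 2

def cFn (n : ℕ) : Sym2 (Fin n) → Bool :=
  Sym2.lift ⟨fun a b => decide (a.1 = 0 ∨ b.1 = 0 ∨ (a.1 % 2 = 1 ∧ b.1 = a.1 + 1) ∨
      (b.1 % 2 = 1 ∧ a.1 = b.1 + 1)),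
    by intro a b; simp only [decide_eq_decide]; tauto⟩

lemma cFn_true {n : ℕ} (a b : Fin n) : cFn n s(a,b) = true ↔
    (a.1 = 0 ∨ b.1 = 0 ∨ (a.1 % 2 = 1 ∧ b.1 = a.1 + 1) ∨ (b.1 % 2 = 1 ∧ a.1 = b.1 + 1)) := by
  simp [cFn]

lemma part_eq_zero_iff {n : ℕ} (v : Fin n) : partFn n v = 0 ↔ v.1 = 0 := by
  unfold partFn; split_ifs with h1 h2 <;> simp_all <;> decide

lemma part_eq_one_iff {n : ℕ} (v : Fin n) : partFn n v = 1 ↔ v.1 ≠ 0 ∧ v.1 % 2 = 1 := by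
  unfold partFn; split_ifs with h1 h2 <;> simp_all <;> decide

lemma part_eq_two_iff {n : ℕ} (v : Fin n) : partFn n v = 2 ↔ v.1 ≠ 0 ∧ v.1 % 2 = 0 := by
  unfold partFn; split_ifs with h1 h2 <;> simp_all <;> omega

lemma mono_structure {n : ℕ} (hn : 3 ≤ n) {S : Finset (Fin n)}
    (h : IsMonoTri (partFn n) (cFn n) S) :
    ∃ u v : Fin n, u.1 % 2 = 1 ∧ v.1 = u.1 + 1 ∧ S = {⟨0, by omega⟩, u, v} := by
  obtain ⟨hcard, hparts, col, hcol⟩ := h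
  -- image of parts is all of Fin 3
  have hinj : Set.InjOn (partFn n) S := by
    intro a ha b hb hab
    by_contra hne
    exact hparts a ha b hb hne hab
  have himg : S.image (partFn n) = Finset.univ := by
    apply Finset.eq_univ_of_card
    rw [Finset.card_image_of_injOn hinj, hcard]
    simp
  have h0 : ∃ a ∈ S, partFn n a = 0 := by
    have : (0 : Fin 3) ∈ S.image (partFn n) := by rw [himg]; exact Finset.mem_univ _
    simpa [Finset.mem_image] using this
  have h1 : ∃ a ∈ S, partFn n a = 1 := by
    have : (1 : Fin 3) ∈ S.image (partFn n) := by rw [himg]; exact Finset.mem_univ _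
    simpa [Finset.mem_image] using this
  have h2 : ∃ a ∈ S, partFn n a = 2 := by
    have : (2 : Fin 3) ∈ S.image (partFn n) := by rw [himg]; exact Finset.mem_univ _
    simpa [Finset.mem_image] using this
  obtain ⟨z, hzS, hz⟩ := h0
  obtain ⟨u, huS, hu⟩ := h1
  obtain ⟨v, hvS, hv⟩ := h2
  rw [part_eq_zero_iff] at hz
  rw [part_eq_one_iff] at hu
  rw [part_eq_two_iff] at hv
  have hzu : z ≠ u := fun e => hu.1 (by rw [← e]; exact hz)
  have hzv : z ≠ v := fun e => hv.1 (by rw [← e]; exact hz)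
  have huv : u ≠ v := fun e => by rw [e] at hu; omega
  -- the colour is true
  have hcolzu : cFn n s(z, u) = col := hcol z hzS u huS hzu
  have : cFn n s(z, u) = true := by rw [cFn_true]; left; exact hz
  have hcoltrue : col = true := by rw [← hcolzu, this]
  -- edge u v
  have hcuv : cFn n s(u, v) = true := by rw [hcol u huS v hvS huv, hcoltrue]
  rw [cFn_true] at hcuv
  have hv1 : v.1 = u.1 + 1 := by omega
  refine ⟨u, v, hu.2, hv1, ?_⟩
  have hzeq : (⟨0, by omega⟩ : Fin n) = z := (Fin.ext hz).symm
  rw [hzeq]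
  apply Finset.eq_of_superset_of_card_ge
  · intro x hx
    simp only [Finset.mem_insert, Finset.mem_singleton] at hx
    rcases hx with rfl | rfl | rfl <;> assumption
  · rw [hcard, Finset.card_insert_of_notMem (by simp [hzu, hzv]),
      Finset.card_insert_of_notMem (by simp [huv]), Finset.card_singleton]

lemma good_colouring {n : ℕ} (hn : 3 ≤ n) : GoodColouring (partFn n) (cFn n) := by
  intro S T hS hT hST a b hab haS hbS haT hbT
  obtain ⟨u, v, hu, hv, hSeq⟩ := mono_structure hn hS
  obtain ⟨u', v', hu', hv', hTeq⟩ := mono_structure hn hT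
  have memS : ∀ x : Fin n, x ∈ S → x.1 = 0 ∨ x.1 = u.1 ∨ x.1 = u.1 + 1 := by
    intro x hx
    rw [hSeq] at hx
    simp only [Finset.mem_insert, Finset.mem_singleton] at hx
    rcases hx with rfl | rfl | rfl
    · left; rfl
    · right; left; rfl
    · right; right; omega
  have memT : ∀ x : Fin n, x ∈ T → x.1 = 0 ∨ x.1 = u'.1 ∨ x.1 = u'.1 + 1 := by
    intro x hx
    rw [hTeq] at hx
    simp only [Finset.mem_insert, Finset.mem_singleton] at hx
    rcases hx with rfl | rfl | rfl
    · left; rfl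
    · right; left; rfl
    · right; right; omega
  have hab' : a.1 ≠ b.1 := fun h => hab (Fin.ext h)
  have h1 := memS a haS
  have h2 := memS b hbS
  have h3 := memT a haT
  have h4 := memT b hbT
  have huu : u.1 = u'.1 := by omega
  have huu' : u = u' := Fin.ext huu
  have hvv : v = v' := Fin.ext (by omega)
  exact hST (by rw [hSeq, hTeq, huu', hvv])

theorem gamma_lower_bound (n : ℕ) (hn : 3 ≤ n) :
    ∃ part : Fin n → Fin 3, ∃ c : Sym2 (Fin n) → Bool,
      {v : Fin n | part v = 0}.ncard = 1 ∧
      (({v : Fin n | part v = 1}.ncard : ℤ) - ({v : Fin n | part v = 2}.ncard : ℤ)).natAbs ≤ 1 ∧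
      GoodColouring part c ∧
      (n - 1) / 2 ≤ {S : Finset (Fin n) | IsMonoTri part c S ∧
        ∀ a ∈ S, ∀ b ∈ S, a ≠ b → c s(a, b) = true}.ncard := by
  refine ⟨partFn n, cFn n, ?_, ?_, good_colouring hn, ?_⟩
  · -- part 0 has one vertex
    have : {v : Fin n | partFn n v = 0} = {⟨0, by omega⟩} := by
      ext v
      simp only [Set.mem_setOf_eq, Set.mem_singleton_iff, part_eq_zero_iff]
      exact ⟨fun h => Fin.ext h, fun h => congrArg Fin.val h⟩
    rw [this, Set.ncard_singleton]
  · -- part sizes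
    have e1 : {v : Fin n | partFn n v = 1} = Set.range (fun k : Fin (n/2) => (⟨2*k.1+1, by omega⟩ : Fin n)) := by
      ext v
      simp only [Set.mem_setOf_eq, part_eq_one_iff, Set.mem_range]
      constructor
      · rintro ⟨h0, h1⟩
        exact ⟨⟨v.1/2, by omega⟩, Fin.ext (by simp; omega)⟩
      · rintro ⟨k, rfl⟩
        simp
    have e2 : {v : Fin n | partFn n v = 2} = Set.range (fun k : Fin ((n-1)/2) => (⟨2*k.1+2, by omega⟩ : Fin n)) := by
      ext v
      simp only [Set.mem_setOf_eq, part_eq_two_iff, Set.mem_range]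
      constructor
      · rintro ⟨h0, h1⟩
        exact ⟨⟨v.1/2 - 1, by omega⟩, Fin.ext (by simp; omega)⟩
      · rintro ⟨k, rfl⟩
        simp
    have c1 : {v : Fin n | partFn n v = 1}.ncard = n/2 := by
      rw [e1, ← Set.image_univ, Set.ncard_image_of_injective _
        (fun a b hab => Fin.ext (by have := Fin.mk.injEq .. ▸ hab; simp [Fin.ext_iff] at hab; omega)),
        Set.ncard_univ, Nat.card_eq_fintype_card, Fintype.card_fin]
    have c2 : {v : Fin n | partFn n v = 2}.ncard = (n-1)/2 := by
      rw [e2, ← Set.image_univ, Set.ncard_image_of_injective _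
        (fun a b hab => Fin.ext (by simp [Fin.ext_iff] at hab; omega)),
        Set.ncard_univ, Nat.card_eq_fintype_card, Fintype.card_fin]
    rw [c1, c2]
    omega
  · -- counting
    set Red : Set (Finset (Fin n)) := {S : Finset (Fin n) | IsMonoTri (partFn n) (cFn n) S ∧
        ∀ a ∈ S, ∀ b ∈ S, a ≠ b → cFn n s(a, b) = true} with hRed
    set f : Fin ((n-1)/2) → Finset (Fin n) := fun k =>
      {⟨0, by omega⟩, ⟨2*k.1+1, by omega⟩, ⟨2*k.1+2, by omega⟩} with hf
    have hfred : ∀ k, (∀ a ∈ f k, ∀ b ∈ f k, a ≠ b → cFn n s(a, b) = true) := by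
      intro k a ha b hb hab
      simp only [hf, Finset.mem_insert, Finset.mem_singleton] at ha hb
      rw [cFn_true]
      rcases ha with rfl | rfl | rfl <;> rcases hb with rfl | rfl | rfl <;> simp <;> omega
    have hfmono : ∀ k, IsMonoTri (partFn n) (cFn n) (f k) := by
      intro k
      refine ⟨?_, ?_, true, hfred k⟩
      · rw [hf]
        rw [Finset.card_insert_of_notMem (by simp [Fin.ext_iff]),
          Finset.card_insert_of_notMem (by simp [Fin.ext_iff]), Finset.card_singleton]
      · intro a ha b hb hab
        simp only [hf, Finset.mem_insert, Finset.mem_singleton] at ha hb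
        have pz : partFn n (⟨0, by omega⟩ : Fin n) = 0 := (part_eq_zero_iff _).mpr rfl
        have p1 : partFn n (⟨2*k.1+1, by omega⟩ : Fin n) = 1 := (part_eq_one_iff _).mpr (by constructor <;> simp <;> omega)
        have p2 : partFn n (⟨2*k.1+2, by omega⟩ : Fin n) = 2 := (part_eq_two_iff _).mpr (by constructor <;> simp <;> omega)
        rcases ha with rfl | rfl | rfl <;> rcases hb with rfl | rfl | rfl <;>
          first
            | (exact absurd rfl hab)
            | (rw [pz, p1]; decide)
            | (rw [pz, p2]; decide)
            | (rw [p1, pz]; decide)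
            | (rw [p1, p2]; decide)
            | (rw [p2, pz]; decide)
            | (rw [p2, p1]; decide)
    have hsub : Set.range f ⊆ Red := by
      rintro _ ⟨k, rfl⟩
      exact ⟨hfmono k, hfred k⟩
    have hinj : Function.Injective f := by
      intro k k' hkk
      have : (⟨2*k.1+1, by omega⟩ : Fin n) ∈ f k' := by
        rw [← hkk]; simp [hf]
      simp only [hf, Finset.mem_insert, Finset.mem_singleton, Fin.ext_iff] at this
      have : k.1 = k'.1 := by omega
      exact Fin.ext this
    calc (n-1)/2 = (Set.range f).ncard := by
          rw [← Set.image_univ, Set.ncard_image_of_injective _ hinj, Set.ncard_univ,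
            Nat.card_eq_fintype_card, Fintype.card_fin]
      _ ≤ Red.ncard := Set.ncard_le_ncard hsub (Set.toFinite Red)
end

section
/- Let G be a complete tripartite graph with parts V₁, V₂, V₃ equipped with a good red-blue edge colouring in which every vertex is contained in at least three red triangles. Then for any two distinct vertices v, u ∈ V₁, either all edges joining u to N_B(v) ∩ V₂ are blue, or all edges joining u to N_B(v) ∩ V₃ are blue, where N_B(v) is the set of vertices joined to v by a blue edge. -/
namespace ClaimAux

variable {n : ℕ} {part : Fin n → Fin 3} {c : Sym2 (Fin n) → Bool}

lemma ne_of_parts {a b : Fin n} (h : part a ≠ part b) : a ≠ b :=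
  fun e => h (by rw [e])

lemma mono_mk {a b d : Fin n} (ha : part a = 0) (hb : part b = 1) (hd : part d = 2)
    {col : Bool} (hab : c s(a,b) = col) (had : c s(a,d) = col) (hbd : c s(b,d) = col) :
    IsMonoTri part c {a, b, d} := by
  have nab : a ≠ b := ne_of_parts (part := part) (by rw [ha, hb]; decide)
  have nad : a ≠ d := ne_of_parts (part := part) (by rw [ha, hd]; decide)
  have nbd : b ≠ d := ne_of_parts (part := part) (by rw [hb, hd]; decide)
  refine ⟨?_, ?_, col, ?_⟩
  · rw [Finset.card_insert_of_notMem (by simp [nab, nad]),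
      Finset.card_insert_of_notMem (by simp [nbd]), Finset.card_singleton]
  · intro x hx y hy hxy
    simp only [Finset.mem_insert, Finset.mem_singleton] at hx hy
    rcases hx with rfl|rfl|rfl <;> rcases hy with rfl|rfl|rfl <;>
      first
        | exact absurd rfl hxy
        | (rw [ha, hb]; decide)
        | (rw [ha, hd]; decide)
        | (rw [hb, hd]; decide)
  · intro x hx y hy hxy
    simp only [Finset.mem_insert, Finset.mem_singleton] at hx hy
    rcases hx with rfl|rfl|rfl <;> rcases hy with rfl|rfl|rfl <;>
      first
        | exact absurd rfl hxy
        | exact hab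
        | exact had
        | exact hbd
        | (rw [Sym2.eq_swap]; first | exact hab | exact had | exact hbd)

lemma tri_eq (hc : GoodColouring part c) {S T : Finset (Fin n)}
    (hS : IsMonoTri part c S) (hT : IsMonoTri part c T) {a b : Fin n} (hab : a ≠ b)
    (h1 : a ∈ S) (h2 : b ∈ S) (h3 : a ∈ T) (h4 : b ∈ T) : S = T := by
  by_contra h
  exact hc S T hS hT h a b hab h1 h2 h3 h4

lemma extract {u : Fin n} (hu : part u = 0) {S : Finset (Fin n)}
    (hS : IsMonoTri part c S) (hr : ∀ a ∈ S, ∀ b ∈ S, a ≠ b → c s(a,b) = true)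
    (huS : u ∈ S) :
    ∃ p q, part p = 1 ∧ part q = 2 ∧ S = {u, p, q} ∧
      c s(u,p) = true ∧ c s(u,q) = true ∧ c s(p,q) = true := by
  obtain ⟨hcard, hparts, -⟩ := hS
  have h2 : (S.erase u).card = 2 := by rw [Finset.card_erase_of_mem huS, hcard]
  obtain ⟨x, y, hxy, hxyS⟩ := Finset.card_eq_two.mp h2
  have hx : x ∈ S.erase u := by rw [hxyS]; simp
  have hy : y ∈ S.erase u := by rw [hxyS]; simp
  have hxS : x ∈ S := Finset.mem_of_mem_erase hx
  have hyS : y ∈ S := Finset.mem_of_mem_erase hy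
  have hxu : x ≠ u := Finset.ne_of_mem_erase hx
  have hyu : y ≠ u := Finset.ne_of_mem_erase hy
  have hSxy : S = {u, x, y} := by rw [← Finset.insert_erase huS, hxyS]
  have hpx : part x ≠ 0 := fun h => hparts x hxS u huS hxu (h.trans hu.symm)
  have hpy : part y ≠ 0 := fun h => hparts y hyS u huS hyu (h.trans hu.symm)
  have hpxy : part x ≠ part y := hparts x hxS y hyS hxy
  have trich : ∀ A B : Fin 3, A ≠ 0 → B ≠ 0 → A ≠ B →
      (A = 1 ∧ B = 2) ∨ (A = 2 ∧ B = 1) := by decide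
  rcases trich _ _ hpx hpy hpxy with ⟨h1, h2'⟩ | ⟨h1, h2'⟩
  · exact ⟨x, y, h1, h2', hSxy, hr u huS x hxS hxu.symm, hr u huS y hyS hyu.symm,
      hr x hxS y hyS hxy⟩
  · refine ⟨y, x, h2', h1, ?_, hr u huS y hyS hyu.symm, hr u huS x hxS hxu.symm,
      hr y hyS x hxS hxy.symm⟩
    rw [hSxy]
    rw [Finset.pair_comm x y]

end ClaimAux

open ClaimAux in
theorem claim_partition (n : ℕ) (part : Fin n → Fin 3) (c : Sym2 (Fin n) → Bool)
    (hc : GoodColouring part c)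
    (hred : ∀ w : Fin n, 3 ≤ {S : Finset (Fin n) | IsMonoTri part c S ∧
        (∀ a ∈ S, ∀ b ∈ S, a ≠ b → c s(a, b) = true) ∧ w ∈ S}.ncard)
    (v u : Fin n) (hv : part v = 0) (hu : part u = 0) (hvu : v ≠ u) :
    (∀ w : Fin n, part w = 1 → c s(v, w) = false → c s(u, w) = false) ∨
    (∀ w : Fin n, part w = 2 → c s(v, w) = false → c s(u, w) = false) := by
  by_contra hcon
  push_neg at hcon
  obtain ⟨⟨w₁, hw₁p, hvw₁, huw₁'⟩, ⟨w₂, hw₂p, hvw₂, huw₂'⟩⟩ := hcon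
  have huw₁ : c s(u, w₁) = true := by
    cases h : c s(u, w₁) with
    | false => exact absurd h huw₁'
    | true => rfl
  have huw₂ : c s(u, w₂) = true := by
    cases h : c s(u, w₂) with
    | false => exact absurd h huw₂'
    | true => rfl
  -- get three distinct red triangles through u
  obtain ⟨t, hts, ht3⟩ := Set.exists_subset_card_eq (hred u)
  rw [Set.ncard_eq_three] at ht3
  obtain ⟨S₁, S₂, S₃, h12, h13, h23, rfl⟩ := ht3
  obtain ⟨hm₁, hr₁, hu₁⟩ := hts (show S₁ ∈ ({S₁, S₂, S₃} : Set _) by simp)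
  obtain ⟨hm₂, hr₂, hu₂⟩ := hts (show S₂ ∈ ({S₁, S₂, S₃} : Set _) by simp)
  obtain ⟨hm₃, hr₃, hu₃⟩ := hts (show S₃ ∈ ({S₁, S₂, S₃} : Set _) by simp)
  obtain ⟨p₁, q₁, hp₁, hq₁, hS₁, hup₁, huq₁, hpq₁⟩ := extract hu hm₁ hr₁ hu₁
  obtain ⟨p₂, q₂, hp₂, hq₂, hS₂, hup₂, huq₂, hpq₂⟩ := extract hu hm₂ hr₂ hu₂
  obtain ⟨p₃, q₃, hp₃, hq₃, hS₃, hup₃, huq₃, hpq₃⟩ := extract hu hm₃ hr₃ hu₃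
  subst hS₁ hS₂ hS₃
  -- basic disequalities
  have key_red : ∀ p q : Fin n, part p = 1 → part q = 2 → c s(u,p) = true →
      c s(u,q) = true → c s(p,q) = true → IsMonoTri part c {u, p, q} :=
    fun p q hp hq h1 h2 h3 => mono_mk hu hp hq h1 h2 h3
  have R₁ := key_red p₁ q₁ hp₁ hq₁ hup₁ huq₁ hpq₁
  have R₂ := key_red p₂ q₂ hp₂ hq₂ hup₂ huq₂ hpq₂
  have R₃ := key_red p₃ q₃ hp₃ hq₃ hup₃ huq₃ hpq₃
  have nup : ∀ p : Fin n, part p = 1 → u ≠ p :=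
    fun p hp => ne_of_parts (part := part) (by rw [hu, hp]; decide)
  have nuq : ∀ q : Fin n, part q = 2 → u ≠ q :=
    fun q hq => ne_of_parts (part := part) (by rw [hu, hq]; decide)
  have nvp : ∀ p : Fin n, part p = 1 → v ≠ p :=
    fun p hp => ne_of_parts (part := part) (by rw [hv, hp]; decide)
  have nvq : ∀ q : Fin n, part q = 2 → v ≠ q :=
    fun q hq => ne_of_parts (part := part) (by rw [hv, hq]; decide)
  have npq : ∀ p q : Fin n, part p = 1 → part q = 2 → p ≠ q :=
    fun p q hp hq => ne_of_parts (part := part) (by rw [hp, hq]; decide)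
  -- distinctness of the p's and q's
  have pdist : ∀ p q p' q' : Fin n, part p = 1 → part q = 2 → part p' = 1 →
      part q' = 2 → IsMonoTri part c {u,p,q} → IsMonoTri part c {u,p',q'} →
      ({u,p,q} : Finset (Fin n)) ≠ {u,p',q'} → p ≠ p' ∧ q ≠ q' := by
    intro p q p' q' hp hq hp' hq' m m' hne
    constructor
    · rintro rfl
      exact hne (tri_eq hc m m' (nup p hp) (by simp) (by simp) (by simp) (by simp))
    · rintro rfl
      exact hne (tri_eq hc m m' (nuq q hq) (by simp) (by simp) (by simp) (by simp))
  obtain ⟨hp12, hq12⟩ := pdist p₁ q₁ p₂ q₂ hp₁ hq₁ hp₂ hq₂ R₁ R₂ h12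
  obtain ⟨hp13, hq13⟩ := pdist p₁ q₁ p₃ q₃ hp₁ hq₁ hp₃ hq₃ R₁ R₃ h13
  obtain ⟨hp23, hq23⟩ := pdist p₂ q₂ p₃ q₃ hp₂ hq₂ hp₃ hq₃ R₂ R₃ h23
  -- derived blue edges for a triangle avoiding w₁, w₂
  have derived : ∀ p q : Fin n, part p = 1 → part q = 2 → p ≠ w₁ → q ≠ w₂ →
      c s(u,p) = true → c s(u,q) = true → c s(p,q) = true →
      c s(w₁,q) = false ∧ c s(p,w₂) = false := by
    intro p q hp hq hpw hqw h1 h2 h3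
    constructor
    · cases hx : c s(w₁, q) with
      | false => rfl
      | true =>
        have m1 : IsMonoTri part c {u, w₁, q} := mono_mk hu hw₁p hq huw₁ h2 hx
        have heq := tri_eq hc m1 (key_red p q hp hq h1 h2 h3) (nuq q hq)
          (by simp) (by simp) (by simp) (by simp)
        have hmem : w₁ ∈ ({u, p, q} : Finset (Fin n)) := by
          rw [← heq]; simp
        simp only [Finset.mem_insert, Finset.mem_singleton] at hmem
        rcases hmem with rfl|rfl|rfl
        · rw [hu] at hw₁p; exact absurd hw₁p (by decide)
        · exact absurd rfl hpw.symm
        · rw [hq] at hw₁p; exact absurd hw₁p (by decide)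
    · cases hx : c s(p, w₂) with
      | false => rfl
      | true =>
        have m1 : IsMonoTri part c {u, p, w₂} := mono_mk hu hp hw₂p h1 huw₂ hx
        have heq := tri_eq hc m1 (key_red p q hp hq h1 h2 h3) (nup p hp)
          (by simp) (by simp) (by simp) (by simp)
        have hmem : w₂ ∈ ({u, p, q} : Finset (Fin n)) := by
          rw [← heq]; simp
        simp only [Finset.mem_insert, Finset.mem_singleton] at hmem
        rcases hmem with rfl|rfl|rfl
        · rw [hu] at hw₂p; exact absurd hw₂p (by decide)
        · rw [hp] at hw₂p; exact absurd hw₂p (by decide)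
        · exact absurd rfl hqw.symm
  -- for each red triangle through u, v is blue to p or to q
  have vchoice : ∀ p q : Fin n, part p = 1 → part q = 2 → c s(u,p) = true →
      c s(u,q) = true → c s(p,q) = true →
      c s(v,p) = false ∨ c s(v,q) = false := by
    intro p q hp hq h1 h2 h3
    cases hx : c s(v, p) with
    | false => exact Or.inl rfl
    | true =>
      cases hy : c s(v, q) with
      | false => exact Or.inr rfl
      | true =>
        exfalso
        have m1 : IsMonoTri part c {v, p, q} := mono_mk hv hp hq hx hy h3
        have heq := tri_eq hc m1 (key_red p q hp hq h1 h2 h3) (npq p q hp hq)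
          (by simp) (by simp) (by simp) (by simp)
        have hmem : v ∈ ({u, p, q} : Finset (Fin n)) := by rw [← heq]; simp
        simp only [Finset.mem_insert, Finset.mem_singleton] at hmem
        rcases hmem with rfl|rfl|rfl
        · exact hvu rfl
        · rw [hv] at hp; exact absurd hp (by decide)
        · rw [hv] at hq; exact absurd hq (by decide)
  -- two good triangles with mixed blue choices give a contradiction
  have mixed : ∀ p q p' q' : Fin n, part p = 1 → part q = 2 → part p' = 1 →
      part q' = 2 → c s(u,p) = true → c s(u,q) = true → c s(p,q) = true →
      c s(u,p') = true → c s(u,q') = true → c s(p',q') = true →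
      q ≠ q' → q' ≠ w₂ → c s(p,w₂) = false → c s(v,p) = false → c s(v,q') = false →
      False := by
    intro p q p' q' hp hq hp' hq' h1 h2 h3 h1' h2' h3' hqq' hq'w hpw hvp hvq'
    cases hx : c s(p, q') with
    | true =>
      have m1 : IsMonoTri part c {u, p, q'} := mono_mk hu hp hq' h1 h2' hx
      have heq := tri_eq hc m1 (key_red p q hp hq h1 h2 h3) (nup p hp)
        (by simp) (by simp) (by simp) (by simp)
      have hmem : q' ∈ ({u, p, q} : Finset (Fin n)) := by rw [← heq]; simp
      simp only [Finset.mem_insert, Finset.mem_singleton] at hmem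
      rcases hmem with rfl|rfl|rfl
      · rw [hu] at hq'; exact absurd hq' (by decide)
      · rw [hp] at hq'; exact absurd hq' (by decide)
      · exact hqq' rfl
    | false =>
      have m1 : IsMonoTri part c {v, p, q'} := mono_mk hv hp hq' hvp hvq' hx
      have m2 : IsMonoTri part c {v, p, w₂} := mono_mk hv hp hw₂p hvp hvw₂ hpw
      have heq := tri_eq hc m1 m2 (nvp p hp) (by simp) (by simp) (by simp) (by simp)
      have hmem : q' ∈ ({v, p, w₂} : Finset (Fin n)) := by rw [← heq]; simp
      simp only [Finset.mem_insert, Finset.mem_singleton] at hmem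
      rcases hmem with rfl|rfl|rfl
      · rw [hv] at hq'; exact absurd hq' (by decide)
      · rw [hp] at hq'; exact absurd hq' (by decide)
      · exact hq'w rfl
  -- two good triangles with both p-choices blue give a contradiction
  have samep : ∀ p p' : Fin n, part p = 1 → part p' = 1 → p ≠ p' →
      c s(p,w₂) = false → c s(p',w₂) = false → c s(v,p) = false →
      c s(v,p') = false → False := by
    intro p p' hp hp' hpp' h1 h2 h3 h4
    have m1 : IsMonoTri part c {v, p, w₂} := mono_mk hv hp hw₂p h3 hvw₂ h1
    have m2 : IsMonoTri part c {v, p', w₂} := mono_mk hv hp' hw₂p h4 hvw₂ h2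
    have heq := tri_eq hc m1 m2 (nvq w₂ hw₂p) (by simp) (by simp) (by simp) (by simp)
    have hmem : p ∈ ({v, p', w₂} : Finset (Fin n)) := by rw [← heq]; simp
    simp only [Finset.mem_insert, Finset.mem_singleton] at hmem
    rcases hmem with rfl|rfl|rfl
    · rw [hv] at hp; exact absurd hp (by decide)
    · exact hpp' rfl
    · rw [hw₂p] at hp; exact absurd hp (by decide)
  have sameq : ∀ q q' : Fin n, part q = 2 → part q' = 2 → q ≠ q' →
      c s(w₁,q) = false → c s(w₁,q') = false → c s(v,q) = false →
      c s(v,q') = false → False := by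
    intro q q' hq hq' hqq' h1 h2 h3 h4
    have m1 : IsMonoTri part c {v, w₁, q} := mono_mk hv hw₁p hq hvw₁ h3 h1
    have m2 : IsMonoTri part c {v, w₁, q'} := mono_mk hv hw₁p hq' hvw₁ h4 h2
    have heq := tri_eq hc m1 m2 (nvp w₁ hw₁p) (by simp) (by simp) (by simp) (by simp)
    have hmem : q ∈ ({v, w₁, q'} : Finset (Fin n)) := by rw [← heq]; simp
    simp only [Finset.mem_insert, Finset.mem_singleton] at hmem
    rcases hmem with rfl|rfl|rfl
    · rw [hv] at hq; exact absurd hq (by decide)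
    · rw [hw₁p] at hq; exact absurd hq (by decide)
    · exact hqq' rfl
  cases hw : c s(w₁, w₂) with
  | false =>
    -- {v, w₁, w₂} is a blue triangle
    have mB : IsMonoTri part c {v, w₁, w₂} := mono_mk hv hw₁p hw₂p hvw₁ hvw₂ hw
    -- find a good triangle avoiding w₁ and w₂
    have pick : ∃ p q : Fin n, part p = 1 ∧ part q = 2 ∧ p ≠ w₁ ∧ q ≠ w₂ ∧
        c s(u,p) = true ∧ c s(u,q) = true ∧ c s(p,q) = true := by
      have hgood : (p₁ ≠ w₁ ∧ q₁ ≠ w₂) ∨ (p₂ ≠ w₁ ∧ q₂ ≠ w₂) ∨ (p₃ ≠ w₁ ∧ q₃ ≠ w₂) := by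
        by_contra h
        push_neg at h
        obtain ⟨h1, h2, h3⟩ := h
        rcases Classical.em (p₁ = w₁) with e1 | e1 <;>
        rcases Classical.em (p₂ = w₁) with e2 | e2 <;>
        rcases Classical.em (p₃ = w₁) with e3 | e3 <;>
          first
            | exact hp12 (e1.trans e2.symm)
            | exact hp13 (e1.trans e3.symm)
            | exact hp23 (e2.trans e3.symm)
            | exact hq12 ((h1 e1).trans (h2 e2).symm)
            | exact hq13 ((h1 e1).trans (h3 e3).symm)
            | exact hq23 ((h2 e2).trans (h3 e3).symm)
      rcases hgood with ⟨a, b⟩ | ⟨a, b⟩ | ⟨a, b⟩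
      · exact ⟨p₁, q₁, hp₁, hq₁, a, b, hup₁, huq₁, hpq₁⟩
      · exact ⟨p₂, q₂, hp₂, hq₂, a, b, hup₂, huq₂, hpq₂⟩
      · exact ⟨p₃, q₃, hp₃, hq₃, a, b, hup₃, huq₃, hpq₃⟩
    obtain ⟨p, q, hp, hq, hpw, hqw, h1, h2, h3⟩ := pick
    obtain ⟨hwq, hpw₂⟩ := derived p q hp hq hpw hqw h1 h2 h3
    rcases vchoice p q hp hq h1 h2 h3 with hvp | hvq
    · -- blue triangles {v,p,w₂} and {v,w₁,w₂} share edge v w₂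
      have m1 : IsMonoTri part c {v, p, w₂} := mono_mk hv hp hw₂p hvp hvw₂ hpw₂
      have heq := tri_eq hc m1 mB (nvq w₂ hw₂p) (by simp) (by simp) (by simp) (by simp)
      have hmem : p ∈ ({v, w₁, w₂} : Finset (Fin n)) := by rw [← heq]; simp
      simp only [Finset.mem_insert, Finset.mem_singleton] at hmem
      rcases hmem with rfl|rfl|rfl
      · rw [hv] at hp; exact absurd hp (by decide)
      · exact hpw rfl
      · rw [hw₂p] at hp; exact absurd hp (by decide)
    · have m1 : IsMonoTri part c {v, w₁, q} := mono_mk hv hw₁p hq hvw₁ hvq hwq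
      have heq := tri_eq hc m1 mB (nvp w₁ hw₁p) (by simp) (by simp) (by simp) (by simp)
      have hmem : q ∈ ({v, w₁, w₂} : Finset (Fin n)) := by rw [← heq]; simp
      simp only [Finset.mem_insert, Finset.mem_singleton] at hmem
      rcases hmem with rfl|rfl|rfl
      · rw [hv] at hq; exact absurd hq (by decide)
      · rw [hw₁p] at hq; exact absurd hq (by decide)
      · exact hqw rfl
  | true =>
    -- {u, w₁, w₂} is a red triangle
    have mR : IsMonoTri part c {u, w₁, w₂} := mono_mk hu hw₁p hw₂p huw₁ huw₂ hw
    -- a red triangle through u containing w₂ must be {u, w₁, w₂}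
    have badq : ∀ p q : Fin n, part p = 1 → part q = 2 → c s(u,p) = true →
        c s(u,q) = true → c s(p,q) = true → q = w₂ → p = w₁ := by
      rintro p q hp hq h1 h2 h3 rfl
      have heq := tri_eq hc (key_red p q hp hq h1 h2 h3) mR (nuq q hq)
        (by simp) (by simp) (by simp) (by simp)
      have hmem : p ∈ ({u, w₁, q} : Finset (Fin n)) := by rw [← heq]; simp
      simp only [Finset.mem_insert, Finset.mem_singleton] at hmem
      rcases hmem with rfl|rfl|rfl
      · rw [hu] at hp; exact absurd hp (by decide)
      · rfl
      · rw [hq] at hp; exact absurd hp (by decide)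
    -- pick two good triangles avoiding w₁ and w₂
    have pick2 : ∃ p q p' q' : Fin n, part p = 1 ∧ part q = 2 ∧ part p' = 1 ∧
        part q' = 2 ∧ p ≠ w₁ ∧ q ≠ w₂ ∧ p' ≠ w₁ ∧ q' ≠ w₂ ∧ p ≠ p' ∧ q ≠ q' ∧
        c s(u,p) = true ∧ c s(u,q) = true ∧ c s(p,q) = true ∧
        c s(u,p') = true ∧ c s(u,q') = true ∧ c s(p',q') = true := by
      by_cases e1 : p₁ = w₁
      · have g2p : p₂ ≠ w₁ := fun h => hp12 (e1 ▸ h ▸ rfl)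
        have g3p : p₃ ≠ w₁ := fun h => hp13 (e1 ▸ h ▸ rfl)
        have g2q : q₂ ≠ w₂ := fun h => g2p (badq p₂ q₂ hp₂ hq₂ hup₂ huq₂ hpq₂ h)
        have g3q : q₃ ≠ w₂ := fun h => g3p (badq p₃ q₃ hp₃ hq₃ hup₃ huq₃ hpq₃ h)
        exact ⟨p₂, q₂, p₃, q₃, hp₂, hq₂, hp₃, hq₃, g2p, g2q, g3p, g3q, hp23, hq23,
          hup₂, huq₂, hpq₂, hup₃, huq₃, hpq₃⟩
      · have g1q : q₁ ≠ w₂ := fun h => e1 (badq p₁ q₁ hp₁ hq₁ hup₁ huq₁ hpq₁ h)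
        by_cases e2 : p₂ = w₁
        · have g3p : p₃ ≠ w₁ := fun h => hp23 (e2 ▸ h ▸ rfl)
          have g3q : q₃ ≠ w₂ := fun h => g3p (badq p₃ q₃ hp₃ hq₃ hup₃ huq₃ hpq₃ h)
          exact ⟨p₁, q₁, p₃, q₃, hp₁, hq₁, hp₃, hq₃, e1, g1q, g3p, g3q, hp13, hq13,
            hup₁, huq₁, hpq₁, hup₃, huq₃, hpq₃⟩
        · have g2q : q₂ ≠ w₂ := fun h => e2 (badq p₂ q₂ hp₂ hq₂ hup₂ huq₂ hpq₂ h)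
          exact ⟨p₁, q₁, p₂, q₂, hp₁, hq₁, hp₂, hq₂, e1, g1q, e2, g2q, hp12, hq12,
            hup₁, huq₁, hpq₁, hup₂, huq₂, hpq₂⟩
    obtain ⟨p, q, p', q', hp, hq, hp', hq', hpw, hqw, hpw', hqw', hpp', hqq',
      h1, h2, h3, h1', h2', h3'⟩ := pick2
    obtain ⟨hwq, hpw₂⟩ := derived p q hp hq hpw hqw h1 h2 h3
    obtain ⟨hwq', hpw₂'⟩ := derived p' q' hp' hq' hpw' hqw' h1' h2' h3'
    rcases vchoice p q hp hq h1 h2 h3 with hvp | hvq <;>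
      rcases vchoice p' q' hp' hq' h1' h2' h3' with hvp' | hvq'
    · exact samep p p' hp hp' hpp' hpw₂ hpw₂' hvp hvp'
    · exact mixed p q p' q' hp hq hp' hq' h1 h2 h3 h1' h2' h3' hqq' hqw' hpw₂ hvp hvq'
    · exact mixed p' q' p q hp' hq' hp hq h1' h2' h3' h1 h2 h3
        (Ne.symm hqq') hqw hpw₂' hvp' hvq
    · exact sameq q q' hq hq' hqq' hwq hwq' hvq hvq'
end
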